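/- Let H(r) and f(r) be formal expansions H = r²h + h₀ + r^{−2}h₂ + ⋯ and f = −(1/4)r² + f₀ + r^{−2}f₂ + ⋯ on (0,∞) × Y. Substituting into the (r,l)-soliton equation H^{im}(∇_i H_{ml,r} − ∇_l H_{im,r}) + 2f_{,rl} − H^{mn}H_{nl,r} f_{,m} = 0 and equating the coefficient of the leading order forces ∂_l f₀ = 0, i.e. f₀ is a (locally) constant function on Y. -/

import Mathlib

noncomputable section

open Filter Asymptotics

/-- Points of coordinate space. -/
abbrev Pt (n : ℕ) : Type := EuclideanSpace ℝ (Fin n)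

/-- The `i`-th coordinate partial derivative of a function. -/
def pd {n : ℕ} (i : Fin n) (F : Pt n → ℝ) (x : Pt n) : ℝ :=
  fderiv ℝ F x (EuclideanSpace.single i 1)

/-- Christoffel symbols `Γ^k_{ij}` of a metric `g`, given in coordinates as a
matrix-valued function; indices are raised using the matrix inverse of `g`. -/
def christoffel {n : ℕ} (g : Pt n → Matrix (Fin n) (Fin n) ℝ) (k i j : Fin n) (x : Pt n) : ℝ :=
  (1 / 2) * ∑ l, (g x)⁻¹ k l *
    (pd i (fun y => g y j l) x + pd j (fun y => g y i l) x - pd l (fun y => g y i j) x)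

/-- Ricci curvature `R_{ij}` of `g` in coordinates. -/
def ricci {n : ℕ} (g : Pt n → Matrix (Fin n) (Fin n) ℝ) (i j : Fin n) (x : Pt n) : ℝ :=
  (∑ k, pd k (christoffel g k i j) x) - (∑ k, pd i (christoffel g k k j) x)
    + (∑ k, ∑ l, christoffel g k k l x * christoffel g l i j x)
    - (∑ k, ∑ l, christoffel g k i l x * christoffel g l k j x)

/-- Scalar curvature `R = g^{ij} R_{ij}`. -/
def scalarCurv {n : ℕ} (g : Pt n → Matrix (Fin n) (Fin n) ℝ) (x : Pt n) : ℝ :=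
  ∑ i, ∑ j, (g x)⁻¹ i j * ricci g i j x

/-- Hessian `(∇∇ f)_{ij} = ∂_i ∂_j f - Γ^k_{ij} ∂_k f`. -/
def hessian {n : ℕ} (g : Pt n → Matrix (Fin n) (Fin n) ℝ) (f : Pt n → ℝ) (i j : Fin n)
    (x : Pt n) : ℝ :=
  pd i (pd j f) x - ∑ k, christoffel g k i j x * pd k f x

/-- Laplacian `Δ f = g^{ij} (∇∇ f)_{ij}`. -/
def laplacian {n : ℕ} (g : Pt n → Matrix (Fin n) (Fin n) ℝ) (f : Pt n → ℝ) (x : Pt n) : ℝ :=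
  ∑ i, ∑ j, (g x)⁻¹ i j * hessian g f i j x

/-- `|∇ f|² = g^{ij} ∂_i f ∂_j f`. -/
def gradSq {n : ℕ} (g : Pt n → Matrix (Fin n) (Fin n) ℝ) (f : Pt n → ℝ) (x : Pt n) : ℝ :=
  ∑ i, ∑ j, (g x)⁻¹ i j * pd i f x * pd j f x

/-- Covariant derivative `∇_a T_{bc}` of a 2-tensor `T` with respect to the
Levi-Civita connection of `g`. -/
def covDeriv2 {n : ℕ} (g : Pt n → Matrix (Fin n) (Fin n) ℝ) (T : Fin n → Fin n → Pt n → ℝ)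
    (a b c : Fin n) (x : Pt n) : ℝ :=
  pd a (T b c) x - (∑ d, christoffel g d a b x * T d c x)
    - ∑ d, christoffel g d a c x * T b d x

/-- `g` is a smooth Riemannian metric in coordinates. -/
structure IsMetric {n : ℕ} (g : Pt n → Matrix (Fin n) (Fin n) ℝ) : Prop where
  smooth : ∀ i j, ContDiff ℝ (⊤ : ℕ∞) fun x => g x i j
  symm : ∀ x, (g x).IsSymm
  posdef : ∀ x, (g x).PosDef

/-- Tangential partial derivative `∂/∂x^i` on `(0,∞) × Y` (coordinate `0` is `r`). -/
def pdT {n : ℕ} (i : Fin n) (F : Pt (n + 1) → ℝ) (x : Pt (n + 1)) : ℝ := pd i.succ F x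

/-- Radial partial derivative `∂/∂r`. -/
def pdr {n : ℕ} (F : Pt (n + 1) → ℝ) (x : Pt (n + 1)) : ℝ := pd 0 F x

/-- The metric `g = dr² + H(r)` in block form, coordinate `0` being `r`. -/
def warp {n : ℕ} (H : Pt (n + 1) → Matrix (Fin n) (Fin n) ℝ) (x : Pt (n + 1)) :
    Matrix (Fin (n + 1)) (Fin (n + 1)) ℝ :=
  Matrix.of fun a b =>
    Fin.cases (Fin.cases (1 : ℝ) (fun _ => 0) b) (fun i => Fin.cases 0 (fun j => H x i j) b) a

/-- Christoffel symbols of the slice metric `H(r)` on `Y`. -/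
def christoffelT {n : ℕ} (H : Pt (n + 1) → Matrix (Fin n) (Fin n) ℝ) (k i j : Fin n)
    (x : Pt (n + 1)) : ℝ :=
  (1 / 2) * ∑ l, (H x)⁻¹ k l *
    (pdT i (fun y => H y j l) x + pdT j (fun y => H y i l) x - pdT l (fun y => H y i j) x)

/-- Ricci curvature `R^H_{ij}` of the slice metric `H(r)`. -/
def ricciT {n : ℕ} (H : Pt (n + 1) → Matrix (Fin n) (Fin n) ℝ) (i j : Fin n)
    (x : Pt (n + 1)) : ℝ :=
  (∑ k, pdT k (christoffelT H k i j) x) - (∑ k, pdT i (christoffelT H k k j) x)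
    + (∑ k, ∑ l, christoffelT H k k l x * christoffelT H l i j x)
    - (∑ k, ∑ l, christoffelT H k i l x * christoffelT H l k j x)

/-- Hessian with respect to the slice metric `H(r)`. -/
def hessT {n : ℕ} (H : Pt (n + 1) → Matrix (Fin n) (Fin n) ℝ) (f : Pt (n + 1) → ℝ)
    (i j : Fin n) (x : Pt (n + 1)) : ℝ :=
  pdT i (pdT j f) x - ∑ k, christoffelT H k i j x * pdT k f x

/-- Covariant derivative `∇_a T_{bc}` with respect to the slice metric `H(r)`. -/
def covT {n : ℕ} (H : Pt (n + 1) → Matrix (Fin n) (Fin n) ℝ) (T : Fin n → Fin n → Pt (n + 1) → ℝ)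
    (a b c : Fin n) (x : Pt (n + 1)) : ℝ :=
  pdT a (T b c) x - (∑ d, christoffelT H d a b x * T d c x)
    - ∑ d, christoffelT H d a c x * T b d x

/-- The tangential coordinates of a point of `(0,∞) × Y`. -/
def tailPt {n : ℕ} (x : Pt (n + 1)) : Pt n := WithLp.toLp 2 (fun i => x i.succ)

/-- The point of `(0,∞) × Y` with radial coordinate `r` and tangential coordinates `y`. -/
def consPt {n : ℕ} (r : ℝ) (y : Pt n) : Pt (n + 1) := WithLp.toLp 2 (fun i => Fin.cases r (fun j => y j) i)

/-- Truncation of the formal series `H = r²h + h₀ + r⁻²h₂ + ⋯` after the term `r^{-2m} h_{2m}`. -/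
def Htrunc {n : ℕ} (h : Pt n → Matrix (Fin n) (Fin n) ℝ)
    (h2 : ℕ → Pt n → Matrix (Fin n) (Fin n) ℝ) (m : ℕ) (x : Pt (n + 1)) :
    Matrix (Fin n) (Fin n) ℝ :=
  Matrix.of fun j k =>
    (x 0) ^ 2 * h (tailPt x) j k
      + ∑ i ∈ Finset.range (m + 1), ((x 0) ^ (2 * i))⁻¹ * h2 i (tailPt x) j k

/-- Truncation of the formal series `f = -r²/4 + f₀ + r⁻²f₂ + ⋯` after `r^{-2m} f_{2m}`. -/
def ftrunc {n : ℕ} (f2 : ℕ → Pt n → ℝ) (m : ℕ) (x : Pt (n + 1)) : ℝ :=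
  -(x 0) ^ 2 / 4 + ∑ i ∈ Finset.range (m + 1), ((x 0) ^ (2 * i))⁻¹ * f2 i (tailPt x)

/-- The gradient expanding soliton tensor `Ric_g + Hess_g f + ½ g` for the truncated
series, where `g = dr² + H(r)`. -/
def solitonE {n : ℕ} (h : Pt n → Matrix (Fin n) (Fin n) ℝ)
    (h2 : ℕ → Pt n → Matrix (Fin n) (Fin n) ℝ) (f2 : ℕ → Pt n → ℝ) (m : ℕ)
    (a b : Fin (n + 1)) (x : Pt (n + 1)) : ℝ :=
  ricci (warp (Htrunc h h2 m)) a b x + hessian (warp (Htrunc h h2 m)) (ftrunc f2 m) a b x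
    + (1 / 2) * warp (Htrunc h h2 m) x a b

/-- The formal series `g = dr² + r²h + Σ r^{-2i} h_{2i}`, `f = -r²/4 + Σ r^{-2i} f_{2i}`
satisfy the gradient expanding soliton equation `Ric + Hess f + ½ g = 0` to all orders in
`r⁻¹`: every component of the soliton tensor of the truncations decays to arbitrarily
high order as `r → ∞` once enough terms are kept. -/
def SolvesFormally {n : ℕ} (h : Pt n → Matrix (Fin n) (Fin n) ℝ)
    (h2 : ℕ → Pt n → Matrix (Fin n) (Fin n) ℝ) (f2 : ℕ → Pt n → ℝ) : Prop :=
  ∀ (k : ℕ) (a b : Fin (n + 1)) (y : Pt n), ∃ m₀ : ℕ, ∀ m ≥ m₀,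
    (fun r : ℝ => solitonE h h2 f2 m a b (consPt r y)) =O[atTop] fun r : ℝ => r ^ (-(k : ℤ))

open ContDiff

namespace Aux

variable {n : ℕ}

/-- coordinate projection as CLM -/
def coordCLM {m : ℕ} (i : Fin m) : Pt m →L[ℝ] ℝ := EuclideanSpace.proj i

@[simp] lemma coordCLM_apply {m : ℕ} (i : Fin m) (x : Pt m) : coordCLM i x = x i := rfl

def tailLM : Pt (n + 1) →ₗ[ℝ] Pt n where
  toFun := tailPt
  map_add' x y := rfl
  map_smul' c x := rfl

def tailCLM : Pt (n + 1) →L[ℝ] Pt n := LinearMap.toContinuousLinearMap tailLM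

@[simp] lemma tailCLM_apply (x : Pt (n + 1)) : tailCLM x = tailPt x := rfl

@[simp] lemma tailPt_consPt (r : ℝ) (y : Pt n) : tailPt (consPt r y) = y := rfl

@[simp] lemma consPt_zero (r : ℝ) (y : Pt n) : consPt r y 0 = r := rfl

lemma single_zero_tail : tailPt (EuclideanSpace.single (0 : Fin (n+1)) (1:ℝ)) = 0 := by
  ext j
  simp [tailPt, EuclideanSpace.single_apply, Fin.succ_ne_zero]

lemma single_succ_tail (i : Fin n) :
    tailPt (EuclideanSpace.single (i.succ : Fin (n+1)) (1:ℝ)) = EuclideanSpace.single i 1 := by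
  ext j
  simp [tailPt, EuclideanSpace.single_apply, Fin.succ_inj]

lemma single_succ_zero (i : Fin n) :
    (EuclideanSpace.single (i.succ : Fin (n+1)) (1:ℝ)) 0 = 0 := by
  simp only [EuclideanSpace.single_apply]
  rw [if_neg]
  exact fun hh => (Fin.succ_ne_zero i) hh.symm

lemma single_zero_zero : (EuclideanSpace.single (0 : Fin (n+1)) (1:ℝ)) 0 = 1 := by
  simp [EuclideanSpace.single_apply]

/-- basic pd computation from HasFDerivAt -/
lemma _root_.HasFDerivAt.pd_eq {m : ℕ} {F : Pt m → ℝ} {L : Pt m →L[ℝ] ℝ} {x : Pt m} (i : Fin m)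
    (h : HasFDerivAt F L x) : pd i F x = L (EuclideanSpace.single i 1) := by
  rw [pd, h.fderiv]

lemma pd_const {m : ℕ} (i : Fin m) (c : ℝ) (x : Pt m) : pd i (fun _ => c) x = 0 := by
  rw [(hasFDerivAt_const c x).pd_eq i]; rfl

lemma pd_congr_nhds {m : ℕ} {F G : Pt m → ℝ} {x : Pt m} (h : F =ᶠ[nhds x] G) (i : Fin m) :
    pd i F x = pd i G x := by
  rw [pd, pd, h.fderiv_eq]

/-- derivative of tail-composition -/
lemma hasFDerivAt_tailcomp {ψ : Pt n → ℝ} {x : Pt (n+1)} (hψ : DifferentiableAt ℝ ψ (tailPt x)) :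
    HasFDerivAt (fun z => ψ (tailPt z)) ((fderiv ℝ ψ (tailPt x)).comp tailCLM) x := by
  have := (hψ.hasFDerivAt).comp x (tailCLM.hasFDerivAt (x := x))
  exact this

lemma pd_zero_tailcomp {ψ : Pt n → ℝ} {x : Pt (n+1)} (hψ : DifferentiableAt ℝ ψ (tailPt x)) :
    pd 0 (fun z => ψ (tailPt z)) x = 0 := by
  rw [(hasFDerivAt_tailcomp hψ).pd_eq 0]
  simp only [ContinuousLinearMap.coe_comp', Function.comp_apply, tailCLM_apply, single_zero_tail]
  simp

lemma pd_succ_tailcomp {ψ : Pt n → ℝ} {x : Pt (n+1)} (i : Fin n)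
    (hψ : DifferentiableAt ℝ ψ (tailPt x)) :
    pd i.succ (fun z => ψ (tailPt z)) x = pd i ψ (tailPt x) := by
  rw [(hasFDerivAt_tailcomp hψ).pd_eq i.succ]
  simp only [ContinuousLinearMap.coe_comp', Function.comp_apply, tailCLM_apply, single_succ_tail]
  rfl

lemma hasFDerivAt_x0pow (k : ℕ) (x : Pt (n+1)) :
    HasFDerivAt (fun z : Pt (n+1) => (z 0) ^ k)
      ((k * (x 0) ^ (k-1)) • (coordCLM 0 : Pt (n+1) →L[ℝ] ℝ)) x := by
  have h1 : HasFDerivAt (fun z : Pt (n+1) => z 0) (coordCLM 0) x :=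
    (coordCLM (0 : Fin (n+1))).hasFDerivAt
  exact (hasDerivAt_pow k (x 0)).comp_hasFDerivAt x h1

lemma hasFDerivAt_x0zpow {x : Pt (n+1)} (p : ℤ) (hx : x 0 ≠ 0) :
    HasFDerivAt (fun z : Pt (n+1) => (z 0) ^ p)
      ((p * (x 0) ^ (p-1)) • (coordCLM 0 : Pt (n+1) →L[ℝ] ℝ)) x := by
  have h1 : HasFDerivAt (fun z : Pt (n+1) => z 0) (coordCLM 0) x :=
    (coordCLM (0 : Fin (n+1))).hasFDerivAt
  exact (hasDerivAt_zpow p (x 0) (Or.inl hx)).comp_hasFDerivAt x h1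

lemma pd_succ_x0zpow {x : Pt (n+1)} (p : ℤ) (hx : x 0 ≠ 0) (i : Fin n) :
    pd i.succ (fun z : Pt (n+1) => (z 0) ^ p) x = 0 := by
  rw [(hasFDerivAt_x0zpow p hx).pd_eq i.succ]
  simp only [ContinuousLinearMap.smul_apply, coordCLM_apply, single_succ_zero, smul_eq_mul,
    mul_zero]

lemma pd_zero_x0zpow {x : Pt (n+1)} (p : ℤ) (hx : x 0 ≠ 0) :
    pd 0 (fun z : Pt (n+1) => (z 0) ^ p) x = p * (x 0) ^ (p-1) := by
  rw [(hasFDerivAt_x0zpow p hx).pd_eq 0]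
  simp only [ContinuousLinearMap.smul_apply, coordCLM_apply, single_zero_zero, smul_eq_mul,
    mul_one]

end Aux
namespace Aux

variable {n : ℕ}

/-- the chart map to (u, y) = (1/r, y) -/
def imap (x : Pt (n + 1)) : ℝ × Pt n := ((x 0)⁻¹, tailPt x)

/-- admissible functions of order `p` near `r = ∞` above the base point `y₀` -/
def Adm (y₀ : Pt n) (p : ℤ) (F : Pt (n + 1) → ℝ) : Prop :=
  ∃ U : Set (ℝ × Pt n), ∃ Φ : ℝ × Pt n → ℝ, IsOpen U ∧ (0, y₀) ∈ U ∧ ContDiffOn ℝ ∞ Φ U ∧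
    ∀ x : Pt (n + 1), 0 < x 0 → imap x ∈ U → F x = (x 0) ^ p * Φ (imap x)

/-- equality near `r = ∞` above `y₀` -/
def EqNear (y₀ : Pt n) (F G : Pt (n + 1) → ℝ) : Prop :=
  ∃ U : Set (ℝ × Pt n), IsOpen U ∧ (0, y₀) ∈ U ∧
    ∀ x : Pt (n + 1), 0 < x 0 → imap x ∈ U → F x = G x

variable {y₀ : Pt n}

lemma continuousOn_imap :
    ContinuousOn (imap : Pt (n+1) → ℝ × Pt n) {x | 0 < x 0} := by
  apply ContinuousOn.prodMk
  · apply ContinuousOn.inv₀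
    · exact ((coordCLM (0 : Fin (n+1))).continuous.comp continuous_id).continuousOn
    · intro x hx; exact ne_of_gt hx
  · exact tailCLM.continuous.continuousOn

lemma isOpen_pos0 : IsOpen {x : Pt (n+1) | 0 < x 0} := by
  have : Continuous fun x : Pt (n+1) => x 0 := (coordCLM (0 : Fin (n+1))).continuous
  exact isOpen_lt continuous_const this

/-- the region above an open set U is open -/
lemma isOpen_region {U : Set (ℝ × Pt n)} (hU : IsOpen U) :
    IsOpen {x : Pt (n+1) | 0 < x 0 ∧ imap x ∈ U} := by
  have := continuousOn_imap.isOpen_inter_preimage (isOpen_pos0 (n := n)) hU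
  convert this using 1
  rfl

lemma EqNear.refl (F : Pt (n+1) → ℝ) : EqNear y₀ F F :=
  ⟨Set.univ, isOpen_univ, trivial, fun _ _ _ => rfl⟩

lemma EqNear.symm {F G : Pt (n+1) → ℝ} (h : EqNear y₀ F G) : EqNear y₀ G F := by
  obtain ⟨U, hU, hm, he⟩ := h
  exact ⟨U, hU, hm, fun x h1 h2 => (he x h1 h2).symm⟩

lemma EqNear.trans {F G K : Pt (n+1) → ℝ} (h : EqNear y₀ F G) (h' : EqNear y₀ G K) :
    EqNear y₀ F K := by
  obtain ⟨U, hU, hm, he⟩ := h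
  obtain ⟨U', hU', hm', he'⟩ := h'
  exact ⟨U ∩ U', hU.inter hU', ⟨hm, hm'⟩, fun x h1 h2 =>
    (he x h1 h2.1).trans (he' x h1 h2.2)⟩

lemma eqNear_of_forall {F G : Pt (n+1) → ℝ} (h : ∀ x : Pt (n+1), 0 < x 0 → F x = G x) :
    EqNear y₀ F G := ⟨Set.univ, isOpen_univ, trivial, fun x h1 _ => h x h1⟩

lemma EqNear.eventuallyEq {F G : Pt (n+1) → ℝ} (h : EqNear y₀ F G) {x : Pt (n+1)}
    (h1 : 0 < x 0) (h2 : imap x ∈ Classical.choose h) : True := trivial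

/-- pd respects EqNear -/
lemma EqNear.pd {F G : Pt (n+1) → ℝ} (h : EqNear y₀ F G) (a : Fin (n+1)) :
    EqNear y₀ (fun x => pd a F x) (fun x => pd a G x) := by
  obtain ⟨U, hU, hm, he⟩ := h
  refine ⟨U, hU, hm, fun x h1 h2 => ?_⟩
  apply pd_congr_nhds
  have hopen := isOpen_region hU
  have hx : x ∈ {x : Pt (n+1) | 0 < x 0 ∧ imap x ∈ U} := ⟨h1, h2⟩
  filter_upwards [hopen.mem_nhds hx] with z hz
  exact he z hz.1 hz.2

lemma Adm.congr {p : ℤ} {F G : Pt (n+1) → ℝ} (h : Adm y₀ p F) (h' : EqNear y₀ F G) :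
    Adm y₀ p G := by
  obtain ⟨U, Φ, hU, hm, hΦ, he⟩ := h
  obtain ⟨U', hU', hm', he'⟩ := h'
  refine ⟨U ∩ U', Φ, hU.inter hU', ⟨hm, hm'⟩, hΦ.mono Set.inter_subset_left,
    fun x h1 h2 => ?_⟩
  rw [← he' x h1 h2.2]; exact he x h1 h2.1

lemma adm_zero (p : ℤ) : Adm y₀ p (fun _ => 0) :=
  ⟨Set.univ, fun _ => 0, isOpen_univ, trivial, contDiffOn_const, fun x _ _ => by simp⟩

lemma Adm.add {p : ℤ} {F G : Pt (n+1) → ℝ} (h : Adm y₀ p F) (h' : Adm y₀ p G) :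
    Adm y₀ p (fun x => F x + G x) := by
  obtain ⟨U, Φ, hU, hm, hΦ, he⟩ := h
  obtain ⟨U', Φ', hU', hm', hΦ', he'⟩ := h'
  refine ⟨U ∩ U', fun q => Φ q + Φ' q, hU.inter hU', ⟨hm, hm'⟩,
    (hΦ.mono Set.inter_subset_left).add (hΦ'.mono Set.inter_subset_right), fun x h1 h2 => ?_⟩
  dsimp only
  rw [he x h1 h2.1, he' x h1 h2.2]; ring

lemma Adm.neg {p : ℤ} {F : Pt (n+1) → ℝ} (h : Adm y₀ p F) : Adm y₀ p (fun x => -F x) := by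
  obtain ⟨U, Φ, hU, hm, hΦ, he⟩ := h
  exact ⟨U, fun q => -Φ q, hU, hm, hΦ.neg, fun x h1 h2 => by
    dsimp only; rw [he x h1 h2]; ring⟩

lemma Adm.sub {p : ℤ} {F G : Pt (n+1) → ℝ} (h : Adm y₀ p F) (h' : Adm y₀ p G) :
    Adm y₀ p (fun x => F x - G x) := by
  have := h.add h'.neg
  simpa [sub_eq_add_neg] using this

lemma Adm.mul {p q : ℤ} {F G : Pt (n+1) → ℝ} (h : Adm y₀ p F) (h' : Adm y₀ q G) :
    Adm y₀ (p + q) (fun x => F x * G x) := by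
  obtain ⟨U, Φ, hU, hm, hΦ, he⟩ := h
  obtain ⟨U', Φ', hU', hm', hΦ', he'⟩ := h'
  refine ⟨U ∩ U', fun q => Φ q * Φ' q, hU.inter hU', ⟨hm, hm'⟩,
    (hΦ.mono Set.inter_subset_left).mul (hΦ'.mono Set.inter_subset_right), fun x h1 h2 => ?_⟩
  dsimp only
  rw [he x h1 h2.1, he' x h1 h2.2, zpow_add₀ (ne_of_gt h1)]; ring

lemma Adm.const_mul {p : ℤ} {F : Pt (n+1) → ℝ} (h : Adm y₀ p F) (c : ℝ) :
    Adm y₀ p (fun x => c * F x) := by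
  obtain ⟨U, Φ, hU, hm, hΦ, he⟩ := h
  exact ⟨U, fun q => c * Φ q, hU, hm, contDiffOn_const.mul hΦ,
    fun x h1 h2 => by dsimp only; rw [he x h1 h2]; ring⟩

lemma Adm.mono {p q : ℤ} {F : Pt (n+1) → ℝ} (h : Adm y₀ p F) (hpq : p ≤ q) :
    Adm y₀ q F := by
  obtain ⟨U, Φ, hU, hm, hΦ, he⟩ := h
  refine ⟨U, fun z => z.1 ^ (q - p).toNat * Φ z, hU, hm,
    ((contDiff_fst.pow _).comp_contDiffOn contDiffOn_id).mul hΦ, fun x h1 h2 => ?_⟩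
  dsimp only
  rw [he x h1 h2]
  have hx : x 0 ≠ 0 := ne_of_gt h1
  have : ((x 0)⁻¹) ^ (q - p).toNat = (x 0) ^ (-((q - p).toNat : ℤ)) := by
    rw [zpow_neg, ← zpow_natCast, inv_zpow]
  show (x 0) ^ p * Φ (imap x) = (x 0) ^ q * ((imap x).1 ^ (q-p).toNat * Φ (imap x))
  have him : (imap x).1 = (x 0)⁻¹ := rfl
  rw [him, this, ← mul_assoc, ← zpow_add₀ hx]
  congr 2
  omega

lemma adm_const (c : ℝ) : Adm y₀ 0 (fun _ => c) :=
  ⟨Set.univ, fun _ => c, isOpen_univ, trivial, contDiffOn_const, fun x h1 _ => by simp⟩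

lemma adm_tail {ψ : Pt n → ℝ} (hψ : ContDiff ℝ ∞ ψ) :
    Adm y₀ 0 (fun x => ψ (tailPt x)) :=
  ⟨Set.univ, fun q => ψ q.2, isOpen_univ, trivial,
    (hψ.comp contDiff_snd).contDiffOn, fun x h1 _ => by simp [imap]⟩

lemma adm_x0zpow (p : ℤ) : Adm y₀ p (fun x => (x 0) ^ p) :=
  ⟨Set.univ, fun _ => 1, isOpen_univ, trivial, contDiffOn_const, fun x h1 _ => by simp⟩

lemma Adm.sum {p : ℤ} {ι : Type*} (s : Finset ι) {F : ι → Pt (n+1) → ℝ}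
    (h : ∀ i ∈ s, Adm y₀ p (F i)) : Adm y₀ p (fun x => ∑ i ∈ s, F i x) := by
  classical
  induction s using Finset.induction_on with
  | empty => simpa using adm_zero p
  | @insert a s' hni ih =>
    have h1 := h a (Finset.mem_insert_self a s')
    have h2 := ih fun i hi => h i (Finset.mem_insert_of_mem hi)
    exact (h1.add h2).congr (eqNear_of_forall fun x hx => (Finset.sum_insert hni (f := fun i => F i x)).symm)

end Aux
namespace Aux

variable {n : ℕ} {y₀ : Pt n}

lemma hasFDerivAt_imap {x : Pt (n+1)} (hx : x 0 ≠ 0) :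
    HasFDerivAt (imap : Pt (n+1) → ℝ × Pt n)
      ((((-((x 0) ^ 2)⁻¹) • (coordCLM 0 : Pt (n+1) →L[ℝ] ℝ)).prod tailCLM)) x := by
  apply HasFDerivAt.prodMk
  · exact (hasDerivAt_inv hx).comp_hasFDerivAt x (coordCLM (0 : Fin (n+1))).hasFDerivAt
  · exact tailCLM.hasFDerivAt

/-- the derivative of a represented function -/
lemma rep_hasFDerivAt {U : Set (ℝ × Pt n)} {Φ : ℝ × Pt n → ℝ} (p : ℤ)
    (hU : IsOpen U) (hΦ : ContDiffOn ℝ ∞ Φ U) {x : Pt (n+1)} (h1 : 0 < x 0)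
    (h2 : imap x ∈ U) :
    HasFDerivAt (fun z => (z 0) ^ p * Φ (imap z))
      ((x 0) ^ p • (fderiv ℝ Φ (imap x)).comp
          ((-((x 0) ^ 2)⁻¹ • (coordCLM 0 : Pt (n+1) →L[ℝ] ℝ)).prod tailCLM)
        + (((p : ℝ) * (x 0) ^ (p - 1)) • (coordCLM 0 : Pt (n+1) →L[ℝ] ℝ)).smulRight
            (Φ (imap x))) x := by
  have hx : x 0 ≠ 0 := ne_of_gt h1
  have hdΦ : DifferentiableAt ℝ Φ (imap x) :=
    (hΦ.differentiableOn (by norm_num)).differentiableAt (hU.mem_nhds h2)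
  have hcomp : HasFDerivAt (fun z : Pt (n+1) => Φ (imap z))
      ((fderiv ℝ Φ (imap x)).comp
        ((((-((x 0) ^ 2)⁻¹) • (coordCLM 0 : Pt (n+1) →L[ℝ] ℝ)).prod tailCLM))) x :=
    hdΦ.hasFDerivAt.comp x (hasFDerivAt_imap hx)
  exact (hasFDerivAt_x0zpow p hx).mul' hcomp

lemma Adm.pd0 {p : ℤ} {F : Pt (n+1) → ℝ} (h : Adm y₀ p F) :
    Adm y₀ (p - 1) (fun x => pd 0 F x) := by
  obtain ⟨U, Φ, hU, hm, hΦ, he⟩ := h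
  refine ⟨U, fun q => (p : ℝ) * Φ q - q.1 * (fderiv ℝ Φ q (1, 0)), hU, hm, ?_, ?_⟩
  · apply ContDiffOn.sub
    · exact contDiffOn_const.mul hΦ
    · exact (contDiff_fst.comp_contDiffOn contDiffOn_id).mul
        ((hΦ.fderiv_of_isOpen hU (le_refl _)).clm_apply contDiffOn_const)
  · intro x h1 h2
    have hx : x 0 ≠ 0 := ne_of_gt h1
    have hxmem : x ∈ {z : Pt (n+1) | 0 < z 0 ∧ imap z ∈ U} := ⟨h1, h2⟩
    dsimp only
    have heq : pd 0 F x = pd 0 (fun z => (z 0) ^ p * Φ (imap z)) x := by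
      apply pd_congr_nhds
      filter_upwards [(isOpen_region hU).mem_nhds hxmem] with z hz
      exact he z hz.1 hz.2
    rw [heq, (rep_hasFDerivAt p hU hΦ h1 h2).pd_eq 0]
    simp only [ContinuousLinearMap.add_apply, ContinuousLinearMap.smul_apply,
      ContinuousLinearMap.coe_comp', Function.comp_apply, ContinuousLinearMap.prod_apply,
      ContinuousLinearMap.smulRight_apply, coordCLM_apply, tailCLM_apply,
      single_zero_zero, single_zero_tail, smul_eq_mul]
    have hlin : (fderiv ℝ Φ (imap x)) (-((x 0) ^ 2)⁻¹ * 1, (0 : Pt n))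
        = (-((x 0) ^ 2)⁻¹) * (fderiv ℝ Φ (imap x)) (1, 0) := by
      have hv : ((-((x 0) ^ 2)⁻¹ * 1, (0 : Pt n)) : ℝ × Pt n)
          = (-((x 0) ^ 2)⁻¹) • ((1 : ℝ), (0 : Pt n)) := by
        rw [Prod.smul_def]; simp
      rw [hv, ContinuousLinearMap.map_smul, smul_eq_mul]
    rw [hlin]
    have him1 : (imap x).1 = (x 0)⁻¹ := rfl
    have e1 : (x 0) ^ p * (-((x 0) ^ 2)⁻¹) = (x 0) ^ (p - 1) * (-(x 0)⁻¹) := by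
      rw [zpow_sub₀ hx, sq]
      field_simp
    calc (x 0) ^ p * (-((x 0) ^ 2)⁻¹ * (fderiv ℝ Φ (imap x)) (1, 0))
          + (p : ℝ) * (x 0) ^ (p - 1) * 1 * Φ (imap x)
        = ((x 0) ^ p * (-((x 0) ^ 2)⁻¹)) * (fderiv ℝ Φ (imap x)) (1, 0)
          + (x 0) ^ (p - 1) * ((p : ℝ) * Φ (imap x)) := by ring
      _ = (x 0) ^ (p - 1) * ((p : ℝ) * Φ (imap x) - (imap x).1 * (fderiv ℝ Φ (imap x)) (1, 0)) := by
          rw [e1, him1]; ring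

lemma Adm.pdSucc {p : ℤ} {F : Pt (n+1) → ℝ} (h : Adm y₀ p F) (i : Fin n) :
    Adm y₀ p (fun x => pd i.succ F x) := by
  obtain ⟨U, Φ, hU, hm, hΦ, he⟩ := h
  refine ⟨U, fun q => fderiv ℝ Φ q (0, EuclideanSpace.single i 1), hU, hm,
    (hΦ.fderiv_of_isOpen hU (le_refl _)).clm_apply contDiffOn_const, ?_⟩
  intro x h1 h2
  have hxmem : x ∈ {z : Pt (n+1) | 0 < z 0 ∧ imap z ∈ U} := ⟨h1, h2⟩
  dsimp only
  have heq : pd i.succ F x = pd i.succ (fun z => (z 0) ^ p * Φ (imap z)) x := by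
    apply pd_congr_nhds
    filter_upwards [(isOpen_region hU).mem_nhds hxmem] with z hz
    exact he z hz.1 hz.2
  rw [heq, (rep_hasFDerivAt p hU hΦ h1 h2).pd_eq i.succ]
  simp only [ContinuousLinearMap.add_apply, ContinuousLinearMap.smul_apply,
    ContinuousLinearMap.coe_comp', Function.comp_apply, ContinuousLinearMap.prod_apply,
    ContinuousLinearMap.smulRight_apply, coordCLM_apply, tailCLM_apply,
    single_succ_zero, single_succ_tail, smul_eq_mul]
  ring

/-- the functions of `Adm` class are differentiable near the ray, after congruence -/
lemma Adm.pd_shift {p : ℤ} {F s : Pt (n+1) → ℝ} (a : Fin (n+1))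
    (hA : Adm y₀ p (fun x => F x - s x))
    (hs : ∀ x : Pt (n+1), 0 < x 0 → DifferentiableAt ℝ s x)
    (hs0 : ∀ x : Pt (n+1), 0 < x 0 → pd a s x = 0)
    {q : ℤ} (hq : (if a = 0 then p - 1 else p) ≤ q) :
    Adm y₀ q (fun x => pd a F x) := by
  have key : EqNear y₀ (fun x => pd a (fun z => F z - s z) x) (fun x => pd a F x) := by
    obtain ⟨U, Φ, hU, hm, hΦ, he⟩ := hA
    refine ⟨U, hU, hm, fun x h1 h2 => ?_⟩
    have hxmem : x ∈ {z : Pt (n+1) | 0 < z 0 ∧ imap z ∈ U} := ⟨h1, h2⟩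
    have hdiff : DifferentiableAt ℝ (fun z => F z - s z) x := by
      have hev : (fun z => F z - s z) =ᶠ[nhds x] (fun z => (z 0) ^ p * Φ (imap z)) := by
        filter_upwards [(isOpen_region hU).mem_nhds hxmem] with z hz
        exact he z hz.1 hz.2
      rw [hev.differentiableAt_iff]
      exact (rep_hasFDerivAt p hU hΦ h1 h2).differentiableAt
    have hFd : DifferentiableAt ℝ F x := by
      have hfe : F = fun z => (F z - s z) + s z := by funext z; ring
      rw [hfe]
      exact hdiff.add (hs x h1)
    show pd a (fun z => F z - s z) x = pd a F x
    unfold pd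
    rw [fderiv_fun_sub hFd (hs x h1)]
    simp only [ContinuousLinearMap.sub_apply]
    have h0 : fderiv ℝ s x (EuclideanSpace.single a 1) = 0 := hs0 x h1
    rw [h0, sub_zero]
  rcases Fin.eq_zero_or_eq_succ a with rfl | ⟨j, rfl⟩
  · simp only [if_pos rfl] at hq
    exact (hA.pd0.congr key).mono hq
  · simp only [if_neg (Fin.succ_ne_zero j)] at hq
    exact ((hA.pdSucc j).congr key).mono hq

@[simp] lemma imap_consPt (r : ℝ) : imap (consPt r y₀) = ((r⁻¹ : ℝ), y₀) := rfl

/-- Adm functions decay along the ray -/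
lemma Adm.isBigO {p : ℤ} {F : Pt (n+1) → ℝ} (h : Adm y₀ p F) :
    (fun r : ℝ => F (consPt r y₀)) =O[atTop] fun r : ℝ => r ^ p := by
  obtain ⟨U, Φ, hU, hm, hΦ, he⟩ := h
  have hcont : ContinuousAt Φ (0, y₀) := hΦ.continuousOn.continuousAt (hU.mem_nhds hm)
  have htends : Tendsto (fun r : ℝ => ((r⁻¹ : ℝ), y₀)) atTop (nhds ((0 : ℝ), y₀)) :=
    tendsto_inv_atTop_zero.prodMk_nhds tendsto_const_nhds
  have hU' : ∀ᶠ r : ℝ in atTop, ((r⁻¹ : ℝ), y₀) ∈ U := htends.eventually_mem (hU.mem_nhds hm)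
  have habs : ContinuousAt (fun q : ℝ × Pt n => |Φ q|) (0, y₀) :=
    continuous_abs.continuousAt.comp hcont
  have hlt : ∀ᶠ q : ℝ × Pt n in nhds ((0 : ℝ), y₀), |Φ q| < |Φ (0, y₀)| + 1 :=
    habs.eventually_lt continuousAt_const (by linarith [abs_nonneg (Φ (0, y₀))])
  have hbound : ∀ᶠ r : ℝ in atTop, |Φ ((r⁻¹ : ℝ), y₀)| < |Φ (0, y₀)| + 1 :=
    htends.eventually hlt
  rw [isBigO_iff]
  refine ⟨|Φ (0, y₀)| + 1, ?_⟩
  filter_upwards [hbound, hU', eventually_gt_atTop (0 : ℝ)] with r h1 h2 h3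
  have hFr : F (consPt r y₀) = r ^ p * Φ ((r⁻¹ : ℝ), y₀) := by
    have := he (consPt r y₀) (by simpa using h3) (by simpa using h2)
    simpa using this
  rw [hFr]
  rw [Real.norm_eq_abs, Real.norm_eq_abs, abs_mul]
  calc |r ^ p| * |Φ ((r⁻¹ : ℝ), y₀)| ≤ |r ^ p| * (|Φ (0, y₀)| + 1) :=
        mul_le_mul_of_nonneg_left (le_of_lt h1) (abs_nonneg _)
    _ = (|Φ (0, y₀)| + 1) * |r ^ p| := by ring

end Aux
namespace Aux

open Matrix

variable {E : Type*} [NormedAddCommGroup E] [NormedSpace ℝ E]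

lemma contDiffOn_matrix_det {N : ℕ} {A : E → Matrix (Fin N) (Fin N) ℝ} {s : Set E}
    (hA : ∀ i j, ContDiffOn ℝ ∞ (fun p => A p i j) s) :
    ContDiffOn ℝ ∞ (fun p => (A p).det) s := by
  have : ∀ p : E, (A p).det = ∑ σ : Equiv.Perm (Fin N),
      (Equiv.Perm.sign σ : ℤ) • ∏ i, A p (σ i) i := fun p => Matrix.det_apply (A p)
  simp only [this]
  apply ContDiffOn.sum
  intro σ _
  have hprod : ContDiffOn ℝ ∞ (fun p => ∏ i, A p (σ i) i) s := by
    classical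
    induction (Finset.univ : Finset (Fin N)) using Finset.induction_on with
    | empty => simpa using contDiffOn_const
    | @insert a t hat ih =>
      have : (fun p => ∏ i ∈ insert a t, A p (σ i) i)
          = fun p => A p (σ a) a * ∏ i ∈ t, A p (σ i) i := by
        funext p; exact Finset.prod_insert hat
      rw [this]
      exact (hA (σ a) a).mul ih
  have : (fun p => (Equiv.Perm.sign σ : ℤ) • ∏ i, A p (σ i) i)
      = fun p => ((Equiv.Perm.sign σ : ℤ) : ℝ) * ∏ i, A p (σ i) i := by
    funext p; rw [zsmul_eq_mul]
  rw [this]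
  exact contDiffOn_const.mul hprod

lemma contDiffOn_matrix_inv {N : ℕ} {A : E → Matrix (Fin N) (Fin N) ℝ} {s : Set E}
    (hA : ∀ i j, ContDiffOn ℝ ∞ (fun p => A p i j) s)
    (hdet : ∀ p ∈ s, (A p).det ≠ 0) (i j : Fin N) :
    ContDiffOn ℝ ∞ (fun p => (A p)⁻¹ i j) s := by
  have hinv : ∀ p : E, (A p)⁻¹ i j = ((A p).det)⁻¹ * (A p).adjugate i j := by
    intro p
    rw [Matrix.inv_def, Matrix.smul_apply, smul_eq_mul, Ring.inverse_eq_inv']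
  simp only [hinv]
  apply ContDiffOn.mul
  · exact (contDiffOn_matrix_det hA).inv hdet
  · have : ∀ p : E, (A p).adjugate i j = ((A p).updateRow j (Pi.single i 1)).det := by
      intro p; rw [Matrix.adjugate_apply]
    simp only [this]
    apply contDiffOn_matrix_det
    intro a b
    by_cases hab : a = j
    · subst hab
      simp only [Matrix.updateRow_self]
      exact contDiffOn_const
    · simp only [Matrix.updateRow_ne hab]
      exact hA a b

lemma continuous_matrix_det {N : ℕ} {A : E → Matrix (Fin N) (Fin N) ℝ}
    (hA : ∀ i j, Continuous (fun p => A p i j)) :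
    Continuous (fun p => (A p).det) := by
  apply Continuous.matrix_det
  exact continuous_matrix fun i j => hA i j

end Aux
namespace Aux

open Matrix

section Main

variable {n : ℕ} (h : Pt n → Matrix (Fin n) (Fin n) ℝ)
  (h2 : ℕ → Pt n → Matrix (Fin n) (Fin n) ℝ)

/-- the rescaled metric in (u,y) coordinates -/
def Mmat (q : ℝ × Pt n) : Matrix (Fin n) (Fin n) ℝ := h q.2 + q.1 ^ 2 • h2 0 q.2

variable {h h2}

section Smooth

variable (hmet : IsMetric h) (hh2smooth : ∀ i j k, ContDiff ℝ (⊤ : ℕ∞) fun x => h2 i x j k)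

include hmet

lemma h_smooth (i j : Fin n) : ContDiff ℝ ∞ (fun y => h y i j) :=
  (hmet.smooth i j).of_le (by simp)

lemma h_det_ne (y : Pt n) : (h y).det ≠ 0 := (hmet.posdef y).det_pos.ne'

lemma hInv_smooth (i j : Fin n) : ContDiff ℝ ∞ (fun y => (h y)⁻¹ i j) := by
  rw [← contDiffOn_univ]
  exact contDiffOn_matrix_inv (fun i j => (h_smooth hmet i j).contDiffOn)
    (fun y _ => h_det_ne hmet y) i j

include hh2smooth

lemma Mmat_smooth (i j : Fin n) : ContDiff ℝ ∞ (fun q : ℝ × Pt n => Mmat h h2 q i j) := by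
  have : (fun q : ℝ × Pt n => Mmat h h2 q i j)
      = fun q : ℝ × Pt n => h q.2 i j + q.1 ^ 2 * h2 0 q.2 i j := by
    funext q; simp [Mmat]
  rw [this]
  exact ((h_smooth hmet i j).comp contDiff_snd).add
    ((contDiff_fst.pow 2).mul (((hh2smooth 0 i j).of_le (by simp)).comp contDiff_snd))

/-- region of invertibility -/
def Vset : Set (ℝ × Pt n) := {q | (Mmat h h2 q).det ≠ 0}

lemma isOpen_Vset : IsOpen (Vset (h := h) (h2 := h2)) := by
  have hc : Continuous fun q : ℝ × Pt n => (Mmat h h2 q).det :=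
    continuous_matrix_det fun i j => (Mmat_smooth hmet hh2smooth i j).continuous
  exact isOpen_ne_fun hc continuous_const

lemma mem_Vset (y₀ : Pt n) : ((0 : ℝ), y₀) ∈ (Vset (h := h) (h2 := h2)) := by
  show (Mmat h h2 (0, y₀)).det ≠ 0
  have : Mmat h h2 ((0 : ℝ), y₀) = h y₀ := by
    simp [Mmat]
  rw [this]
  exact h_det_ne hmet y₀

lemma Minv_smooth (i j : Fin n) :
    ContDiffOn ℝ ∞ (fun q : ℝ × Pt n => (Mmat h h2 q)⁻¹ i j) (Vset (h := h) (h2 := h2)) :=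
  contDiffOn_matrix_inv (fun i j => (Mmat_smooth hmet hh2smooth i j).contDiffOn)
    (fun q hq => hq) i j

end Smooth

lemma Htrunc_apply (x : Pt (n+1)) (i j : Fin n) :
    Htrunc h h2 0 x i j = (x 0) ^ 2 * h (tailPt x) i j + h2 0 (tailPt x) i j := by
  simp [Htrunc]

lemma ftrunc_apply {f2 : ℕ → Pt n → ℝ} (x : Pt (n+1)) :
    ftrunc f2 0 x = -(x 0) ^ 2 / 4 + f2 0 (tailPt x) := by
  simp [ftrunc]

lemma Htrunc_eq_smul {x : Pt (n+1)} (hx : x 0 ≠ 0) :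
    Htrunc h h2 0 x = ((x 0) ^ 2) • Mmat h h2 (imap x) := by
  ext i j
  rw [Htrunc_apply]
  simp only [Matrix.smul_apply, Mmat, Matrix.add_apply, smul_eq_mul]
  have : (imap x).1 = (x 0)⁻¹ := rfl
  rw [this]
  show (x 0) ^ 2 * h (tailPt x) i j + h2 0 (tailPt x) i j
      = (x 0) ^ 2 * (h (tailPt x) i j + ((x 0)⁻¹) ^ 2 • h2 0 (tailPt x) i j)
  field_simp
  rw [smul_eq_mul, one_div, mul_add, ← mul_assoc, mul_inv_cancel₀ (pow_ne_zero 2 hx), one_mul]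

lemma Htrunc_det_ne {x : Pt (n+1)} (hx : 0 < x 0)
    (hV : imap x ∈ (Vset (h := h) (h2 := h2))) :
    IsUnit (Htrunc h h2 0 x).det := by
  rw [Htrunc_eq_smul (ne_of_gt hx), Matrix.det_smul]
  rw [isUnit_iff_ne_zero]
  exact mul_ne_zero (pow_ne_zero _ (pow_ne_zero _ (ne_of_gt hx))) hV

lemma Htrunc_inv_eq {x : Pt (n+1)} (hx : 0 < x 0)
    (hV : imap x ∈ (Vset (h := h) (h2 := h2))) :
    (Htrunc h h2 0 x)⁻¹ = (((x 0) ^ 2)⁻¹) • (Mmat h h2 (imap x))⁻¹ := by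
  apply Matrix.inv_eq_right_inv
  rw [Htrunc_eq_smul (ne_of_gt hx), Matrix.smul_mul, Matrix.mul_smul, smul_smul,
    Matrix.mul_nonsing_inv _ (isUnit_iff_ne_zero.mpr hV)]
  rw [mul_inv_cancel₀ (pow_ne_zero 2 (ne_of_gt hx))]
  simp

end Main

end Aux
namespace Aux

open Matrix

section Main2

variable {n : ℕ} {h : Pt n → Matrix (Fin n) (Fin n) ℝ}
  {h2 : ℕ → Pt n → Matrix (Fin n) (Fin n) ℝ} {y₀ : Pt n}

lemma contDiffOn_entry_mul {E : Type*} [NormedAddCommGroup E] [NormedSpace ℝ E]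
    {N : ℕ} {A B : E → Matrix (Fin N) (Fin N) ℝ} {s : Set E}
    (hA : ∀ i j, ContDiffOn ℝ ∞ (fun p => A p i j) s)
    (hB : ∀ i j, ContDiffOn ℝ ∞ (fun p => B p i j) s) (i j : Fin N) :
    ContDiffOn ℝ ∞ (fun p => (A p * B p) i j) s := by
  have : (fun p => (A p * B p) i j) = fun p => ∑ c, A p i c * B p c j := by
    funext p; rw [Matrix.mul_apply]
  rw [this]
  exact ContDiffOn.sum fun c _ => (hA i c).mul (hB c j)

variable (hmet : IsMetric h) (hh2smooth : ∀ i j k, ContDiff ℝ (⊤ : ℕ∞) fun x => h2 i x j k)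

include hmet hh2smooth

/-- decomposition of the inverse of the truncated metric -/
lemma Htrunc_inv_dec (k c : Fin n) :
    Adm y₀ (-4) (fun x => (Htrunc h h2 0 x)⁻¹ k c
      - (x 0) ^ (-2 : ℤ) * (h (tailPt x))⁻¹ k c) := by
  refine ⟨Vset (h := h) (h2 := h2),
    fun q => (-((Mmat h h2 q)⁻¹ * h2 0 q.2 * (h q.2)⁻¹)) k c,
    isOpen_Vset hmet hh2smooth, mem_Vset (h2 := h2) hmet hh2smooth y₀, ?_, ?_⟩
  · have hsm : ContDiffOn ℝ ∞
        (fun q : ℝ × Pt n => ((Mmat h h2 q)⁻¹ * h2 0 q.2 * (h q.2)⁻¹) k c)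
        (Vset (h := h) (h2 := h2)) := by
      apply contDiffOn_entry_mul
      · apply contDiffOn_entry_mul
        · exact fun i j => Minv_smooth hmet hh2smooth i j
        · exact fun i j => (((hh2smooth 0 i j).of_le (by simp)).comp contDiff_snd).contDiffOn
      · exact fun i j => ((hInv_smooth hmet i j).comp contDiff_snd).contDiffOn
    have : (fun q : ℝ × Pt n => (-((Mmat h h2 q)⁻¹ * h2 0 q.2 * (h q.2)⁻¹)) k c)
        = fun q => -(((Mmat h h2 q)⁻¹ * h2 0 q.2 * (h q.2)⁻¹) k c) := by
      funext q; simp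
    rw [this]
    exact hsm.neg
  · intro x hx hV
    have hx' : x 0 ≠ 0 := ne_of_gt hx
    set q : ℝ × Pt n := imap x with hq
    have hMdet : IsUnit (Mmat h h2 q).det := isUnit_iff_ne_zero.mpr hV
    have hhdet : IsUnit (h q.2).det := isUnit_iff_ne_zero.mpr (h_det_ne hmet q.2)
    -- matrix identity
    have hMid : (Mmat h h2 q)⁻¹ - (h q.2)⁻¹
        = (q.1 ^ 2) • (-((Mmat h h2 q)⁻¹ * h2 0 q.2 * (h q.2)⁻¹)) := by
      have e1 : (Mmat h h2 q)⁻¹ * (h q.2) * (h q.2)⁻¹ = (Mmat h h2 q)⁻¹ := by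
        rw [Matrix.mul_assoc, Matrix.mul_nonsing_inv _ hhdet, Matrix.mul_one]
      have e2 : (Mmat h h2 q)⁻¹ * (Mmat h h2 q) * (h q.2)⁻¹ = (h q.2)⁻¹ := by
        rw [Matrix.nonsing_inv_mul _ hMdet, Matrix.one_mul]
      have e3 : (Mmat h h2 q)⁻¹ - (h q.2)⁻¹
          = (Mmat h h2 q)⁻¹ * ((h q.2) - Mmat h h2 q) * (h q.2)⁻¹ := by
        rw [Matrix.mul_sub, Matrix.sub_mul, e1, e2]
      rw [e3]
      have e4 : (h q.2) - Mmat h h2 q = -((q.1 ^ 2) • h2 0 q.2) := by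
        simp [Mmat]
      rw [e4]
      rw [Matrix.mul_neg, Matrix.neg_mul]
      rw [Matrix.mul_smul, Matrix.smul_mul]
      simp [Matrix.mul_assoc]
    have hHinv := Htrunc_inv_eq (h := h) (h2 := h2) hx hV
    have hent : (Htrunc h h2 0 x)⁻¹ k c = ((x 0) ^ 2)⁻¹ * (Mmat h h2 q)⁻¹ k c := by
      rw [hHinv]; simp; exact Or.inl rfl
    dsimp only
    rw [hent]
    have hq1 : q.1 = (x 0)⁻¹ := rfl
    have hMent : (Mmat h h2 q)⁻¹ k c = (h q.2)⁻¹ k c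
        + q.1 ^ 2 * (-((Mmat h h2 q)⁻¹ * h2 0 q.2 * (h q.2)⁻¹)) k c := by
      have := congrFun (congrFun (congrArg (fun A => A) hMid) k) c
      simp only [Matrix.sub_apply, Matrix.smul_apply, smul_eq_mul] at this
      linarith
    rw [hMent]
    have hq2 : q.2 = tailPt x := rfl
    rw [hq1, hq2]
    have hz2 : (x 0) ^ (-2 : ℤ) = ((x 0) ^ 2)⁻¹ := by
      rw [show (-2 : ℤ) = -((2 : ℕ) : ℤ) by norm_num, _root_.zpow_neg, zpow_natCast]
    have hz4 : (x 0) ^ (-4 : ℤ) = ((x 0) ^ 2)⁻¹ * ((x 0)⁻¹) ^ 2 := by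
      rw [show (-4 : ℤ) = -((4 : ℕ) : ℤ) by norm_num, _root_.zpow_neg, zpow_natCast,
        inv_pow, ← mul_inv, ← pow_add]
    rw [hz2, hz4]
    ring

/-- plain order bound for the inverse entries -/
lemma Htrunc_inv_adm (k c : Fin n) :
    Adm y₀ (-2) (fun x => (Htrunc h h2 0 x)⁻¹ k c) := by
  have h1 := (Htrunc_inv_dec (y₀ := y₀) hmet hh2smooth k c).mono (by norm_num : (-4:ℤ) ≤ -2)
  have h2' : Adm y₀ (-2) (fun x => (x 0) ^ (-2 : ℤ) * (h (tailPt x))⁻¹ k c) := by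
    have := (adm_x0zpow (y₀ := y₀) (-2)).mul (adm_tail (y₀ := y₀) (hInv_smooth hmet k c))
    simpa using this
  have := h1.add h2'
  refine this.congr (eqNear_of_forall fun x hx => ?_)
  dsimp only; ring

omit hmet hh2smooth in
lemma hasFDerivAt_Htrunc (hs1 : ContDiff ℝ ∞ (fun y => h y i j))
    (hs2 : ContDiff ℝ ∞ (fun y => h2 0 y i j)) (x : Pt (n+1)) :
    HasFDerivAt (fun z => Htrunc h h2 0 z i j)
      (((x 0 ^ 2) • ((fderiv ℝ (fun y => h y i j) (tailPt x)).comp tailCLM)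
          + (((2 : ℝ) * x 0 ^ 1) • (coordCLM 0 : Pt (n+1) →L[ℝ] ℝ)).smulRight
              (h (tailPt x) i j))
        + (fderiv ℝ (fun y => h2 0 y i j) (tailPt x)).comp tailCLM) x := by
  have hfe : (fun z : Pt (n+1) => Htrunc h h2 0 z i j)
      = fun z => (z 0) ^ 2 * h (tailPt z) i j + h2 0 (tailPt z) i j := by
    funext z; exact Htrunc_apply z i j
  rw [hfe]
  have hd1 : HasFDerivAt (fun z : Pt (n+1) => (z 0) ^ 2)
      (((2 : ℝ) * x 0 ^ 1) • (coordCLM 0 : Pt (n+1) →L[ℝ] ℝ)) x := by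
    have h0 := hasFDerivAt_x0pow (n := n) 2 x
    have he2 : ((2 : ℕ) : ℝ) * x 0 ^ (2 - 1) = (2 : ℝ) * x 0 ^ 1 := by norm_num
    rw [he2] at h0
    exact h0
  have hd2 := hasFDerivAt_tailcomp (x := x) (hs1.differentiable (by norm_num)).differentiableAt
  have hd3 := hasFDerivAt_tailcomp (x := x) (hs2.differentiable (by norm_num)).differentiableAt
  exact (hd1.mul' hd2).add hd3

omit hmet hh2smooth in
/-- exact radial derivative of the truncated metric entries -/
lemma pd_zero_Htrunc (hs1 : ContDiff ℝ ∞ (fun y => h y i j))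
    (hs2 : ContDiff ℝ ∞ (fun y => h2 0 y i j)) (x : Pt (n+1)) :
    pd 0 (fun z => Htrunc h h2 0 z i j) x = 2 * (x 0) * h (tailPt x) i j := by
  rw [(hasFDerivAt_Htrunc hs1 hs2 x).pd_eq 0]
  simp only [ContinuousLinearMap.add_apply, ContinuousLinearMap.smul_apply,
    ContinuousLinearMap.coe_comp', Function.comp_apply, tailCLM_apply,
    ContinuousLinearMap.smulRight_apply, coordCLM_apply, single_zero_zero, single_zero_tail,
    smul_eq_mul, map_zero]
  ring

omit hmet hh2smooth in
/-- exact tangential derivative of the truncated metric entries -/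
lemma pd_succ_Htrunc (hs1 : ContDiff ℝ ∞ (fun y => h y i j))
    (hs2 : ContDiff ℝ ∞ (fun y => h2 0 y i j)) (x : Pt (n+1)) (a : Fin n) :
    pd a.succ (fun z => Htrunc h h2 0 z i j) x
      = (x 0) ^ 2 * pd a (fun y => h y i j) (tailPt x)
        + pd a (fun y => h2 0 y i j) (tailPt x) := by
  rw [(hasFDerivAt_Htrunc hs1 hs2 x).pd_eq a.succ]
  simp only [ContinuousLinearMap.add_apply, ContinuousLinearMap.smul_apply,
    ContinuousLinearMap.coe_comp', Function.comp_apply, tailCLM_apply,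
    ContinuousLinearMap.smulRight_apply, coordCLM_apply, single_succ_zero, single_succ_tail,
    smul_eq_mul]
  show (x 0) ^ 2 * (fderiv ℝ (fun y => h y i j) (tailPt x)) (EuclideanSpace.single a 1)
      + 2 * x 0 ^ 1 * 0 * h (tailPt x) i j
      + (fderiv ℝ (fun y => h2 0 y i j) (tailPt x)) (EuclideanSpace.single a 1) = _
  unfold pd
  ring

end Main2

end Aux
namespace Aux

open Matrix

section Blk

variable {n : ℕ}

def blkm (A : Matrix (Fin n) (Fin n) ℝ) : Matrix (Fin (n+1)) (Fin (n+1)) ℝ :=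
  Matrix.of fun a b =>
    Fin.cases (Fin.cases (1 : ℝ) (fun _ => 0) b) (fun i => Fin.cases 0 (fun j => A i j) b) a

@[simp] lemma blkm_00 (A : Matrix (Fin n) (Fin n) ℝ) : blkm A 0 0 = 1 := rfl
@[simp] lemma blkm_0succ (A : Matrix (Fin n) (Fin n) ℝ) (j : Fin n) :
    blkm A 0 j.succ = 0 := rfl
@[simp] lemma blkm_succ0 (A : Matrix (Fin n) (Fin n) ℝ) (i : Fin n) :
    blkm A i.succ 0 = 0 := rfl
@[simp] lemma blkm_succsucc (A : Matrix (Fin n) (Fin n) ℝ) (i j : Fin n) :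
    blkm A i.succ j.succ = A i j := rfl

lemma warp_eq_blkm (H : Pt (n+1) → Matrix (Fin n) (Fin n) ℝ) (x : Pt (n+1)) :
    warp H x = blkm (H x) := rfl

lemma blkm_mul (A B : Matrix (Fin n) (Fin n) ℝ) : blkm A * blkm B = blkm (A * B) := by
  ext a b
  rw [Matrix.mul_apply, Fin.sum_univ_succ]
  refine Fin.cases ?_ (fun i => ?_) a <;> refine Fin.cases ?_ (fun j => ?_) b <;>
    simp [Matrix.mul_apply]

lemma blkm_one : blkm (1 : Matrix (Fin n) (Fin n) ℝ) = 1 := by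
  ext a b
  refine Fin.cases ?_ (fun i => ?_) a <;> refine Fin.cases ?_ (fun j => ?_) b <;>
    simp [Matrix.one_apply, Fin.succ_ne_zero, (Fin.succ_ne_zero _).symm, Fin.succ_inj]

lemma blkm_inv {A : Matrix (Fin n) (Fin n) ℝ} (hA : IsUnit A.det) :
    (blkm A)⁻¹ = blkm A⁻¹ := by
  apply Matrix.inv_eq_right_inv
  rw [blkm_mul, Matrix.mul_nonsing_inv _ hA, blkm_one]

end Blk

section WarpGamma

variable {n : ℕ} {h : Pt n → Matrix (Fin n) (Fin n) ℝ}
  {h2 : ℕ → Pt n → Matrix (Fin n) (Fin n) ℝ} {y₀ : Pt n}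

/-- warp entry functions -/
lemma warp_fun_00 (H : Pt (n+1) → Matrix (Fin n) (Fin n) ℝ) :
    (fun z => warp H z 0 0) = fun _ => (1 : ℝ) := rfl
lemma warp_fun_0succ (H : Pt (n+1) → Matrix (Fin n) (Fin n) ℝ) (j : Fin n) :
    (fun z => warp H z 0 j.succ) = fun _ => (0 : ℝ) := rfl
lemma warp_fun_succ0 (H : Pt (n+1) → Matrix (Fin n) (Fin n) ℝ) (i : Fin n) :
    (fun z => warp H z i.succ 0) = fun _ => (0 : ℝ) := rfl
lemma warp_fun_succsucc (H : Pt (n+1) → Matrix (Fin n) (Fin n) ℝ) (i j : Fin n) :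
    (fun z => warp H z i.succ j.succ) = fun z => H z i j := rfl

variable (hmet : IsMetric h) (hh2smooth : ∀ i j k, ContDiff ℝ (⊤ : ℕ∞) fun x => h2 i x j k)

/-- abbreviation for the warp metric of the truncation -/
def gW (h : Pt n → Matrix (Fin n) (Fin n) ℝ) (h2 : ℕ → Pt n → Matrix (Fin n) (Fin n) ℝ) :
    Pt (n+1) → Matrix (Fin (n+1)) (Fin (n+1)) ℝ := warp (Htrunc h h2 0)

lemma warp_inv_eq {x : Pt (n+1)} (hx : 0 < x 0)
    (hV : imap x ∈ (Vset (h := h) (h2 := h2))) :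
    (gW h h2 x)⁻¹ = blkm ((Htrunc h h2 0 x)⁻¹) := by
  rw [gW, warp_eq_blkm]
  exact blkm_inv (Htrunc_det_ne hx hV)

include hmet hh2smooth

lemma hsm1 (i j : Fin n) : ContDiff ℝ ∞ (fun y => h y i j) := h_smooth hmet i j
lemma hsm2 (i j : Fin n) : ContDiff ℝ ∞ (fun y => h2 0 y i j) :=
  (hh2smooth 0 i j).of_le (by simp)

/-- Γ^0_{00} -/
lemma gammaW_000 {x : Pt (n+1)} (hx : 0 < x 0)
    (hV : imap x ∈ (Vset (h := h) (h2 := h2))) :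
    christoffel (gW h h2) 0 0 0 x = 0 := by
  rw [christoffel, warp_inv_eq hx hV, Fin.sum_univ_succ]
  have e1 : ∀ c : Fin n, blkm ((Htrunc h h2 0 x)⁻¹) 0 c.succ = 0 := fun c => rfl
  have e0 : pd (0 : Fin (n+1)) (fun y => gW h h2 y 0 0) x = 0 := by
    rw [gW, warp_fun_00]; exact pd_const _ _ _
  simp only [e1, e0, blkm_00, zero_mul, Finset.sum_const_zero, add_zero]
  ring

/-- Γ^0_{0,j+1} and Γ^0_{j+1,0} -/
lemma gammaW_00succ {x : Pt (n+1)} (hx : 0 < x 0)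
    (hV : imap x ∈ (Vset (h := h) (h2 := h2))) (j : Fin n) :
    christoffel (gW h h2) 0 0 j.succ x = 0 := by
  rw [christoffel, warp_inv_eq hx hV, Fin.sum_univ_succ]
  have e1 : ∀ c : Fin n, blkm ((Htrunc h h2 0 x)⁻¹) 0 c.succ = 0 := fun c => rfl
  have ea : pd (0 : Fin (n+1)) (fun y => gW h h2 y j.succ 0) x = 0 := by
    rw [gW, warp_fun_succ0]; exact pd_const _ _ _
  have eb : pd j.succ (fun y => gW h h2 y 0 0) x = 0 := by
    rw [gW, warp_fun_00]; exact pd_const _ _ _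
  have ec : pd (0 : Fin (n+1)) (fun y => gW h h2 y 0 j.succ) x = 0 := by
    rw [gW, warp_fun_0succ]; exact pd_const _ _ _
  simp only [e1, ea, eb, ec, blkm_00, zero_mul, Finset.sum_const_zero, add_zero]
  ring

lemma gammaW_0succ0 {x : Pt (n+1)} (hx : 0 < x 0)
    (hV : imap x ∈ (Vset (h := h) (h2 := h2))) (j : Fin n) :
    christoffel (gW h h2) 0 j.succ 0 x = 0 := by
  rw [christoffel, warp_inv_eq hx hV, Fin.sum_univ_succ]
  have e1 : ∀ c : Fin n, blkm ((Htrunc h h2 0 x)⁻¹) 0 c.succ = 0 := fun c => rfl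
  have ea : pd j.succ (fun y => gW h h2 y 0 0) x = 0 := by
    rw [gW, warp_fun_00]; exact pd_const _ _ _
  have eb : pd (0 : Fin (n+1)) (fun y => gW h h2 y j.succ 0) x = 0 := by
    rw [gW, warp_fun_succ0]; exact pd_const _ _ _
  have ec : pd (0 : Fin (n+1)) (fun y => gW h h2 y j.succ 0) x = 0 := eb
  simp only [e1, ea, eb, ec, blkm_00, zero_mul, Finset.sum_const_zero, add_zero]
  ring

/-- Γ^{k+1}_{00} -/
lemma gammaW_succ00 {x : Pt (n+1)} (hx : 0 < x 0)
    (hV : imap x ∈ (Vset (h := h) (h2 := h2))) (k : Fin n) :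
    christoffel (gW h h2) k.succ 0 0 x = 0 := by
  rw [christoffel, warp_inv_eq hx hV, Fin.sum_univ_succ]
  have e0 : blkm ((Htrunc h h2 0 x)⁻¹) k.succ 0 = 0 := rfl
  have ea : ∀ c : Fin n, pd (0 : Fin (n+1)) (fun y => gW h h2 y 0 c.succ) x = 0 := by
    intro c; rw [gW, warp_fun_0succ]; exact pd_const _ _ _
  have eb : ∀ c : Fin n, pd c.succ (fun y => gW h h2 y 0 0) x = 0 := by
    intro c; rw [gW, warp_fun_00]; exact pd_const _ _ _
  simp only [e0, ea, eb, zero_mul, zero_add]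
  rw [Finset.sum_eq_zero (fun (c : Fin n) _ => by ring)]
  ring

/-- Γ^{k+1}_{0,j+1} (exact form) -/
lemma gammaW_succ0succ {x : Pt (n+1)} (hx : 0 < x 0)
    (hV : imap x ∈ (Vset (h := h) (h2 := h2))) (k j : Fin n) :
    christoffel (gW h h2) k.succ 0 j.succ x
      = (x 0) * ∑ c, (Htrunc h h2 0 x)⁻¹ k c * h (tailPt x) j c := by
  rw [christoffel, warp_inv_eq hx hV, Fin.sum_univ_succ]
  have e0 : blkm ((Htrunc h h2 0 x)⁻¹) k.succ 0 = 0 := rfl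
  have ea : ∀ c : Fin n, pd (0 : Fin (n+1)) (fun y => gW h h2 y j.succ c.succ) x
      = 2 * (x 0) * h (tailPt x) j c := by
    intro c
    rw [gW, warp_fun_succsucc]
    exact pd_zero_Htrunc (hsm1 hmet hh2smooth j c) (hsm2 hmet hh2smooth j c) x
  have eb : ∀ c : Fin n, pd j.succ (fun y => gW h h2 y 0 c.succ) x = 0 := by
    intro c; rw [gW, warp_fun_0succ]; exact pd_const _ _ _
  have ec : ∀ c : Fin n, pd c.succ (fun y => gW h h2 y 0 j.succ) x = 0 := by
    intro c; rw [gW, warp_fun_0succ]; exact pd_const _ _ _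
  simp only [e0, zero_mul, zero_add, blkm_succsucc, ea, eb, ec, add_zero, sub_zero]
  rw [Finset.mul_sum, Finset.mul_sum]
  exact Finset.sum_congr rfl fun c _ => by ring

end WarpGamma

end Aux
namespace Aux

open Matrix

section WarpGamma2

variable {n : ℕ} {h : Pt n → Matrix (Fin n) (Fin n) ℝ}
  {h2 : ℕ → Pt n → Matrix (Fin n) (Fin n) ℝ} {y₀ : Pt n}

variable (hmet : IsMetric h) (hh2smooth : ∀ i j k, ContDiff ℝ (⊤ : ℕ∞) fun x => h2 i x j k)

include hmet hh2smooth

lemma eqNearV {F G : Pt (n+1) → ℝ}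
    (hFG : ∀ x : Pt (n+1), 0 < x 0 → imap x ∈ (Vset (h := h) (h2 := h2)) → F x = G x) :
    EqNear y₀ F G :=
  ⟨Vset (h := h) (h2 := h2), isOpen_Vset hmet hh2smooth, mem_Vset (h2 := h2) hmet hh2smooth y₀,
    hFG⟩

/-- Γ^{k+1}_{j+1,0} (exact form) -/
lemma gammaW_succsucc0 {x : Pt (n+1)} (hx : 0 < x 0)
    (hV : imap x ∈ (Vset (h := h) (h2 := h2))) (k j : Fin n) :
    christoffel (gW h h2) k.succ j.succ 0 x
      = (x 0) * ∑ c, (Htrunc h h2 0 x)⁻¹ k c * h (tailPt x) j c := by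
  rw [christoffel, warp_inv_eq hx hV, Fin.sum_univ_succ]
  have e0 : blkm ((Htrunc h h2 0 x)⁻¹) k.succ 0 = 0 := rfl
  have ea : ∀ c : Fin n, pd (0 : Fin (n+1)) (fun y => gW h h2 y j.succ c.succ) x
      = 2 * (x 0) * h (tailPt x) j c := by
    intro c
    rw [gW, warp_fun_succsucc]
    exact pd_zero_Htrunc (hsm1 hmet hh2smooth j c) (hsm2 hmet hh2smooth j c) x
  have eb : ∀ c : Fin n, pd j.succ (fun y => gW h h2 y 0 c.succ) x = 0 := by
    intro c; rw [gW, warp_fun_0succ]; exact pd_const _ _ _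
  have ec : ∀ c : Fin n, pd c.succ (fun y => gW h h2 y j.succ 0) x = 0 := by
    intro c; rw [gW, warp_fun_succ0]; exact pd_const _ _ _
  simp only [e0, zero_mul, zero_add, blkm_succsucc, ea, eb, ec, add_zero, sub_zero, zero_add]
  rw [Finset.mul_sum, Finset.mul_sum]
  exact Finset.sum_congr rfl fun c _ => by ring

/-- Γ^{k+1}_{i+1,j+1} equals the slice Christoffel symbol -/
lemma gammaW_tang {x : Pt (n+1)} (hx : 0 < x 0)
    (hV : imap x ∈ (Vset (h := h) (h2 := h2))) (k i j : Fin n) :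
    christoffel (gW h h2) k.succ i.succ j.succ x
      = christoffelT (Htrunc h h2 0) k i j x := by
  rw [christoffel, christoffelT, warp_inv_eq hx hV, Fin.sum_univ_succ]
  have e0 : blkm ((Htrunc h h2 0 x)⁻¹) k.succ 0 = 0 := rfl
  simp only [e0, zero_mul, zero_add, blkm_succsucc]
  rfl

/-- decomposition of the mixed Christoffel symbols -/
lemma gammaW_mixed_dec (k j : Fin n) :
    Adm y₀ (-3) (fun x => christoffel (gW h h2) k.succ 0 j.succ x
      - (x 0) ^ (-1 : ℤ) * (if k = j then (1:ℝ) else 0)) := by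
  have hG : Adm y₀ (-3) (fun x => (x 0) ^ (1 : ℤ) *
      ∑ c, ((Htrunc h h2 0 x)⁻¹ k c - (x 0) ^ (-2 : ℤ) * (h (tailPt x))⁻¹ k c)
        * h (tailPt x) j c) := by
    have hsum : Adm y₀ (-4) (fun x =>
        ∑ c, ((Htrunc h h2 0 x)⁻¹ k c - (x 0) ^ (-2 : ℤ) * (h (tailPt x))⁻¹ k c)
          * h (tailPt x) j c) := by
      apply Adm.sum
      intro c _
      have := (Htrunc_inv_dec (y₀ := y₀) hmet hh2smooth k c).mul
        (adm_tail (y₀ := y₀) (hsm1 hmet hh2smooth j c))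
      simpa using this
    have := (adm_x0zpow (y₀ := y₀) 1).mul hsum
    simpa using this
  refine hG.congr (eqNearV hmet hh2smooth fun x hx hV => ?_)
  have hΓ := gammaW_succ0succ hmet hh2smooth hx hV k j
  dsimp only
  rw [hΓ]
  have hδ : ∑ c, (h (tailPt x))⁻¹ k c * h (tailPt x) j c = (if k = j then (1:ℝ) else 0) := by
    have hsymm : ∀ c : Fin n, h (tailPt x) j c = h (tailPt x) c j := by
      intro c
      have := hmet.symm (tailPt x)
      rw [Matrix.IsSymm] at this
      conv_lhs => rw [← this]
      rfl
    have hmul : ((h (tailPt x))⁻¹ * (h (tailPt x))) k j = (1 : Matrix (Fin n) (Fin n) ℝ) k j :=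
      by rw [Matrix.nonsing_inv_mul _ (isUnit_iff_ne_zero.mpr (h_det_ne hmet (tailPt x)))]
    rw [Matrix.mul_apply, Matrix.one_apply] at hmul
    rw [Finset.sum_congr rfl fun c _ => by rw [hsymm c]]
    exact hmul
  have hx' : (x 0) ≠ 0 := ne_of_gt hx
  have hz1 : (x 0) ^ (1 : ℤ) = x 0 := zpow_one _
  -- expand sum
  rw [Finset.sum_congr rfl (fun c _ => by rw [sub_mul] : ∀ c ∈ Finset.univ,
    ((Htrunc h h2 0 x)⁻¹ k c - (x 0) ^ (-2 : ℤ) * (h (tailPt x))⁻¹ k c) * h (tailPt x) j c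
      = (Htrunc h h2 0 x)⁻¹ k c * h (tailPt x) j c
        - (x 0) ^ (-2 : ℤ) * (h (tailPt x))⁻¹ k c * h (tailPt x) j c)]
  rw [Finset.sum_sub_distrib]
  have hz2 : ∑ c, (x 0) ^ (-2 : ℤ) * (h (tailPt x))⁻¹ k c * h (tailPt x) j c
      = (x 0) ^ (-2 : ℤ) * (if k = j then (1:ℝ) else 0) := by
    rw [← hδ, Finset.mul_sum]
    exact Finset.sum_congr rfl fun c _ => by ring
  rw [hz2, hz1, Finset.mul_sum]
  have hzz : x 0 * ((x 0) ^ (-2 : ℤ) * (if k = j then (1:ℝ) else 0))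
      = (x 0) ^ (-1 : ℤ) * (if k = j then (1:ℝ) else 0) := by
    have : x 0 * (x 0) ^ (-2 : ℤ) = (x 0) ^ (-1 : ℤ) := by
      rw [show ((-1 : ℤ)) = 1 + (-2) by norm_num, zpow_add₀ hx', zpow_one]
    rw [← mul_assoc, this]
  rw [mul_sub, hzz, Finset.mul_sum]

/-- the same for the other index order -/
lemma gammaW_mixed_dec' (k j : Fin n) :
    Adm y₀ (-3) (fun x => christoffel (gW h h2) k.succ j.succ 0 x
      - (x 0) ^ (-1 : ℤ) * (if k = j then (1:ℝ) else 0)) := by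
  refine (gammaW_mixed_dec (y₀ := y₀) hmet hh2smooth k j).congr
    (eqNearV hmet hh2smooth fun x hx hV => ?_)
  dsimp only
  rw [gammaW_succ0succ hmet hh2smooth hx hV k j, gammaW_succsucc0 hmet hh2smooth hx hV k j]

end WarpGamma2

end Aux
namespace Aux

open Matrix

section TangDec

variable {n : ℕ} {h : Pt n → Matrix (Fin n) (Fin n) ℝ}
  {h2 : ℕ → Pt n → Matrix (Fin n) (Fin n) ℝ} {y₀ : Pt n}

lemma pd_smooth {m : ℕ} (a : Fin m) {F : Pt m → ℝ} (hF : ContDiff ℝ ∞ F) :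
    ContDiff ℝ ∞ (fun y => pd a F y) := by
  have h1 : ContDiff ℝ ∞ (fderiv ℝ F) := hF.fderiv_right (by simp)
  exact h1.clm_apply contDiff_const

variable (hmet : IsMetric h) (hh2smooth : ∀ i j k, ContDiff ℝ (⊤ : ℕ∞) fun x => h2 i x j k)

include hmet

lemma christoffel_h_smooth (k i j : Fin n) :
    ContDiff ℝ ∞ (fun y => christoffel h k i j y) := by
  show ContDiff ℝ ∞ fun y => (1 / 2 : ℝ) * ∑ c, (h y)⁻¹ k c *
    (pd i (fun z => h z j c) y + pd j (fun z => h z i c) y - pd c (fun z => h z i j) y)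
  apply ContDiff.mul contDiff_const
  apply ContDiff.sum
  intro c _
  apply ContDiff.mul (hInv_smooth hmet k c)
  exact ((pd_smooth i (h_smooth hmet j c)).add (pd_smooth j (h_smooth hmet i c))).sub
    (pd_smooth c (h_smooth hmet i j))

include hh2smooth

/-- decomposition of the tangential Christoffel symbols of the truncation -/
lemma christoffelT_dec (k i j : Fin n) :
    Adm y₀ (-2) (fun x => christoffelT (Htrunc h h2 0) k i j x
      - christoffel h k i j (tailPt x)) := by
  have brh_adm : ∀ c : Fin n, Adm y₀ 0 (fun x =>
      pd i (fun z => h z j c) (tailPt x) + pd j (fun z => h z i c) (tailPt x)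
        - pd c (fun z => h z i j) (tailPt x)) := by
    intro c
    exact adm_tail (ψ := fun y => pd i (fun z => h z j c) y + pd j (fun z => h z i c) y
        - pd c (fun z => h z i j) y)
      (((pd_smooth i (h_smooth hmet j c)).add (pd_smooth j (h_smooth hmet i c))).sub
        (pd_smooth c (h_smooth hmet i j)))
  have brh2_adm : ∀ c : Fin n, Adm y₀ 0 (fun x =>
      pd i (fun z => h2 0 z j c) (tailPt x) + pd j (fun z => h2 0 z i c) (tailPt x)
        - pd c (fun z => h2 0 z i j) (tailPt x)) := by
    intro c
    exact adm_tail (ψ := fun y => pd i (fun z => h2 0 z j c) y + pd j (fun z => h2 0 z i c) y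
        - pd c (fun z => h2 0 z i j) y)
      (((pd_smooth i (hsm2 hmet hh2smooth j c)).add
        (pd_smooth j (hsm2 hmet hh2smooth i c))).sub (pd_smooth c (hsm2 hmet hh2smooth i j)))
  have Dc_adm : ∀ c : Fin n, Adm y₀ (-4) (fun x =>
      (Htrunc h h2 0 x)⁻¹ k c - (x 0) ^ (-2 : ℤ) * (h (tailPt x))⁻¹ k c) :=
    fun c => Htrunc_inv_dec hmet hh2smooth k c
  have hR : Adm y₀ (-2) (fun x => (1/2 : ℝ) * ∑ c,
      (((Htrunc h h2 0 x)⁻¹ k c - (x 0) ^ (-2 : ℤ) * (h (tailPt x))⁻¹ k c)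
          * ((x 0) ^ (2 : ℤ) * (pd i (fun z => h z j c) (tailPt x)
              + pd j (fun z => h z i c) (tailPt x) - pd c (fun z => h z i j) (tailPt x))
            + (pd i (fun z => h2 0 z j c) (tailPt x) + pd j (fun z => h2 0 z i c) (tailPt x)
              - pd c (fun z => h2 0 z i j) (tailPt x)))
        + (x 0) ^ (-2 : ℤ) * ((h (tailPt x))⁻¹ k c
            * (pd i (fun z => h2 0 z j c) (tailPt x) + pd j (fun z => h2 0 z i c) (tailPt x)
              - pd c (fun z => h2 0 z i j) (tailPt x))))) := by
    apply Adm.const_mul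
    apply Adm.sum
    intro c _
    apply Adm.add
    · have t1 : Adm y₀ 2 (fun x => (x 0) ^ (2 : ℤ) * (pd i (fun z => h z j c) (tailPt x)
          + pd j (fun z => h z i c) (tailPt x) - pd c (fun z => h z i j) (tailPt x))
          + (pd i (fun z => h2 0 z j c) (tailPt x) + pd j (fun z => h2 0 z i c) (tailPt x)
            - pd c (fun z => h2 0 z i j) (tailPt x))) := by
        apply Adm.add
        · simpa using (adm_x0zpow (y₀ := y₀) 2).mul (brh_adm c)
        · exact (brh2_adm c).mono (by norm_num)
      simpa using (Dc_adm c).mul t1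
    · have t2 : Adm y₀ 0 (fun x => (h (tailPt x))⁻¹ k c
          * (pd i (fun z => h2 0 z j c) (tailPt x) + pd j (fun z => h2 0 z i c) (tailPt x)
            - pd c (fun z => h2 0 z i j) (tailPt x))) := by
        simpa using (adm_tail (y₀ := y₀) (hInv_smooth hmet k c)).mul (brh2_adm c)
      simpa using (adm_x0zpow (y₀ := y₀) (-2)).mul t2
  refine hR.congr (eqNear_of_forall fun x hx => ?_)
  have hx' : x 0 ≠ 0 := ne_of_gt hx
  dsimp only
  symm
  rw [christoffelT, christoffel]
  rw [← mul_sub, ← Finset.sum_sub_distrib]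
  congr 1
  apply Finset.sum_congr rfl
  intro c _
  have e1 : pdT i (fun y => Htrunc h h2 0 y j c) x
      = (x 0) ^ 2 * pd i (fun z => h z j c) (tailPt x) + pd i (fun z => h2 0 z j c) (tailPt x) :=
    pd_succ_Htrunc (hsm1 hmet hh2smooth j c) (hsm2 hmet hh2smooth j c) x i
  have e2 : pdT j (fun y => Htrunc h h2 0 y i c) x
      = (x 0) ^ 2 * pd j (fun z => h z i c) (tailPt x) + pd j (fun z => h2 0 z i c) (tailPt x) :=
    pd_succ_Htrunc (hsm1 hmet hh2smooth i c) (hsm2 hmet hh2smooth i c) x j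
  have e3 : pdT c (fun y => Htrunc h h2 0 y i j) x
      = (x 0) ^ 2 * pd c (fun z => h z i j) (tailPt x) + pd c (fun z => h2 0 z i j) (tailPt x) :=
    pd_succ_Htrunc (hsm1 hmet hh2smooth i j) (hsm2 hmet hh2smooth i j) x c
  rw [e1, e2, e3]
  have hz2 : ((x 0) : ℝ) ^ (2 : ℤ) = (x 0) ^ (2 : ℕ) := by
    rw [show ((2:ℤ)) = ((2:ℕ) : ℤ) by norm_num, zpow_natCast]
  have hc : (x 0) ^ (-2 : ℤ) * (x 0) ^ (2 : ℕ) = 1 := by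
    rw [show ((-2:ℤ)) = -((2:ℕ) : ℤ) by norm_num, _root_.zpow_neg, zpow_natCast]
    exact inv_mul_cancel₀ (pow_ne_zero _ hx')
  rw [hz2]
  linear_combination ((h (tailPt x))⁻¹ k c * (pd i (fun z => h z j c) (tailPt x)
    + pd j (fun z => h z i c) (tailPt x) - pd c (fun z => h z i j) (tailPt x))) * hc

/-- decomposition of the tangential Christoffel symbols of the warp metric -/
lemma gammaW_tang_dec (k i j : Fin n) :
    Adm y₀ (-2) (fun x => christoffel (gW h h2) k.succ i.succ j.succ x
      - christoffel h k i j (tailPt x)) := by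
  refine (christoffelT_dec (y₀ := y₀) hmet hh2smooth k i j).congr
    (eqNearV hmet hh2smooth fun x hx hV => ?_)
  rw [gammaW_tang hmet hh2smooth hx hV k i j]

end TangDec

end Aux
namespace Aux

open Matrix

section Ricci

variable {n : ℕ} {h : Pt n → Matrix (Fin n) (Fin n) ℝ}
  {h2 : ℕ → Pt n → Matrix (Fin n) (Fin n) ℝ} {y₀ : Pt n}

lemma pd_mul_const {m : ℕ} {F : Pt m → ℝ} {x : Pt m} (hF : DifferentiableAt ℝ F x)
    (c : ℝ) (a : Fin m) : pd a (fun z => F z * c) x = pd a F x * c := by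
  unfold pd
  rw [fderiv_mul_const hF]
  simp [mul_comm]

lemma EqNear.mul_right0 {F G : Pt (n+1) → ℝ} (hG : EqNear y₀ G (fun _ => 0)) :
    EqNear y₀ (fun x => F x * G x) (fun _ => 0) := by
  obtain ⟨U, hU, hm, he⟩ := hG
  exact ⟨U, hU, hm, fun x h1 h2 => by dsimp only; rw [he x h1 h2]; ring⟩

lemma EqNear.mul_left0 {F G : Pt (n+1) → ℝ} (hF : EqNear y₀ F (fun _ => 0)) :
    EqNear y₀ (fun x => F x * G x) (fun _ => 0) := by
  obtain ⟨U, hU, hm, he⟩ := hF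
  exact ⟨U, hU, hm, fun x h1 h2 => by dsimp only; rw [he x h1 h2]; ring⟩

lemma adm_of_eqNear_zero {p : ℤ} {F : Pt (n+1) → ℝ} (hF : EqNear y₀ F (fun _ => 0)) :
    Adm y₀ p F := (adm_zero p).congr hF.symm

variable (hmet : IsMetric h) (hh2smooth : ∀ i j k, ContDiff ℝ (⊤ : ℕ∞) fun x => h2 i x j k)

include hmet hh2smooth

/-- Γ^0_{00}, Γ^0_{0,b} and Γ^{k+1}_{00} vanish near infinity -/
lemma eqNear_gamma000 : EqNear y₀ (fun x => christoffel (gW h h2) 0 0 0 x) (fun _ => 0) :=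
  eqNearV hmet hh2smooth fun x hx hV => gammaW_000 hmet hh2smooth hx hV

lemma eqNear_gamma00succ (j : Fin n) :
    EqNear y₀ (fun x => christoffel (gW h h2) 0 0 j.succ x) (fun _ => 0) :=
  eqNearV hmet hh2smooth fun x hx hV => gammaW_00succ hmet hh2smooth hx hV j

lemma eqNear_gamma0succ0 (j : Fin n) :
    EqNear y₀ (fun x => christoffel (gW h h2) 0 j.succ 0 x) (fun _ => 0) :=
  eqNearV hmet hh2smooth fun x hx hV => gammaW_0succ0 hmet hh2smooth hx hV j

lemma eqNear_gammasucc00 (k : Fin n) :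
    EqNear y₀ (fun x => christoffel (gW h h2) k.succ 0 0 x) (fun _ => 0) :=
  eqNearV hmet hh2smooth fun x hx hV => gammaW_succ00 hmet hh2smooth hx hV k

/-- differentiability and tangential derivative of the mixed shift -/
lemma shift_mixed_diff (c : ℝ) :
    (∀ x : Pt (n+1), 0 < x 0 → DifferentiableAt ℝ (fun z : Pt (n+1) => (z 0) ^ (-1 : ℤ) * c) x)
    ∧ ∀ (k : Fin n) (x : Pt (n+1)), 0 < x 0 →
        pd k.succ (fun z : Pt (n+1) => (z 0) ^ (-1 : ℤ) * c) x = 0 := by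
  constructor
  · intro x hx
    exact ((hasFDerivAt_x0zpow (-1) (ne_of_gt hx)).differentiableAt).mul_const c
  · intro k x hx
    rw [pd_mul_const ((hasFDerivAt_x0zpow (-1) (ne_of_gt hx)).differentiableAt) c k.succ]
    rw [pd_succ_x0zpow (-1) (ne_of_gt hx) k]
    ring

/-- S1 -/
lemma hS1 (l : Fin n) : Adm y₀ (-2)
    (fun x => ∑ a : Fin (n+1), pd a (christoffel (gW h h2) a 0 l.succ) x) := by
  have hfe : (fun x : Pt (n+1) => ∑ a : Fin (n+1), pd a (christoffel (gW h h2) a 0 l.succ) x)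
      = fun x => pd 0 (christoffel (gW h h2) 0 0 l.succ) x
          + ∑ k : Fin n, pd k.succ (christoffel (gW h h2) k.succ 0 l.succ) x := by
    funext x; exact Fin.sum_univ_succ _
  rw [hfe]
  apply Adm.add
  · apply adm_of_eqNear_zero
    refine (((eqNear_gamma00succ (y₀ := y₀) hmet hh2smooth l).pd 0).trans ?_)
    exact eqNear_of_forall fun x _ => pd_const _ _ _
  · apply Adm.sum
    intro k _
    refine Adm.pd_shift k.succ (gammaW_mixed_dec (y₀ := y₀) hmet hh2smooth k l)
      (fun x hx => (shift_mixed_diff hmet hh2smooth (if k = l then (1:ℝ) else 0)).1 x hx)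
      (fun x hx => (shift_mixed_diff hmet hh2smooth (if k = l then (1:ℝ) else 0)).2 k x hx)
      ?_
    rw [if_neg (Fin.succ_ne_zero k)]
    norm_num

/-- S2 -/
lemma hS2 (l : Fin n) : Adm y₀ (-2)
    (fun x => ∑ a : Fin (n+1), pd 0 (christoffel (gW h h2) a a l.succ) x) := by
  have hfe : (fun x : Pt (n+1) => ∑ a : Fin (n+1), pd 0 (christoffel (gW h h2) a a l.succ) x)
      = fun x => pd 0 (christoffel (gW h h2) 0 0 l.succ) x
          + ∑ k : Fin n, pd 0 (christoffel (gW h h2) k.succ k.succ l.succ) x := by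
    funext x; exact Fin.sum_univ_succ _
  rw [hfe]
  apply Adm.add
  · apply adm_of_eqNear_zero
    refine (((eqNear_gamma00succ (y₀ := y₀) hmet hh2smooth l).pd 0).trans ?_)
    exact eqNear_of_forall fun x _ => pd_const _ _ _
  · apply Adm.sum
    intro k _
    refine Adm.pd_shift 0 (gammaW_tang_dec (y₀ := y₀) hmet hh2smooth k k l)
      (fun x hx => ?_) (fun x hx => ?_) ?_
    · exact (hasFDerivAt_tailcomp (x := x)
        (((christoffel_h_smooth hmet k k l).differentiable (by norm_num)).differentiableAt
          )).differentiableAt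
    · exact pd_zero_tailcomp
        (((christoffel_h_smooth hmet k k l).differentiable (by norm_num)).differentiableAt)
    · norm_num

/-- per-term decomposition for S3 -/
lemma hS3term (l k c : Fin n) : Adm y₀ (-3)
    (fun x => christoffel (gW h h2) k.succ k.succ c.succ x
        * christoffel (gW h h2) c.succ 0 l.succ x
      - (x 0) ^ (-1 : ℤ) * (if c = l then (1:ℝ) else 0) * christoffel h k k c (tailPt x)) := by
  have hA := gammaW_tang_dec (y₀ := y₀) hmet hh2smooth k k c
  have hB := gammaW_mixed_dec (y₀ := y₀) hmet hh2smooth c l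
  have hs : Adm y₀ (-1) (fun x : Pt (n+1) => (x 0) ^ (-1 : ℤ) * (if c = l then (1:ℝ) else 0)) := by
    simpa using (adm_x0zpow (y₀ := y₀) (-1)).mul (adm_const (if c = l then (1:ℝ) else 0))
  have ha : Adm y₀ 0 (fun x => christoffel h k k c (tailPt x)) :=
    adm_tail (christoffel_h_smooth hmet k k c)
  have t1 := (hA.mul hB).mono (by norm_num : (-2) + (-3) ≤ (-3 : ℤ))
  have t2 := (hA.mul hs).mono (by norm_num : (-2) + (-1) ≤ (-3 : ℤ))
  have t3 := (ha.mul hB).mono (by norm_num : 0 + (-3) ≤ (-3 : ℤ))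
  have := (t1.add t2).add t3
  refine this.congr (eqNear_of_forall fun x hx => ?_)
  dsimp only
  ring

/-- per-term decomposition for S4 -/
lemma hS4term (l k c : Fin n) : Adm y₀ (-3)
    (fun x => christoffel (gW h h2) k.succ 0 c.succ x
        * christoffel (gW h h2) c.succ k.succ l.succ x
      - (x 0) ^ (-1 : ℤ) * (if k = c then (1:ℝ) else 0) * christoffel h c k l (tailPt x)) := by
  have hA := gammaW_mixed_dec (y₀ := y₀) hmet hh2smooth k c
  have hB := gammaW_tang_dec (y₀ := y₀) hmet hh2smooth c k l
  have hs : Adm y₀ (-1) (fun x : Pt (n+1) => (x 0) ^ (-1 : ℤ) * (if k = c then (1:ℝ) else 0)) := by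
    simpa using (adm_x0zpow (y₀ := y₀) (-1)).mul (adm_const (if k = c then (1:ℝ) else 0))
  have ha : Adm y₀ 0 (fun x => christoffel h c k l (tailPt x)) :=
    adm_tail (christoffel_h_smooth hmet c k l)
  have t1 := (hA.mul hB).mono (by norm_num : (-3) + (-2) ≤ (-3 : ℤ))
  have t2 := (hs.mul hB).mono (by norm_num : (-1) + (-2) ≤ (-3 : ℤ))
  have t3 := (hA.mul ha).mono (by norm_num : (-3) + 0 ≤ (-3 : ℤ))
  have := (t1.add t2).add t3
  refine this.congr (eqNear_of_forall fun x hx => ?_)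
  dsimp only
  ring

/-- S3 -/
lemma hS3 (l : Fin n) : Adm y₀ (-2)
    (fun x => (∑ a : Fin (n+1), ∑ b : Fin (n+1),
        christoffel (gW h h2) a a b x * christoffel (gW h h2) b 0 l.succ x)
      - (x 0) ^ (-1 : ℤ) * ∑ k : Fin n, christoffel h k k l (tailPt x)) := by
  -- the terms with a zero factor
  have hZ1 : Adm y₀ (-2) (fun x => christoffel (gW h h2) 0 0 0 x
      * christoffel (gW h h2) 0 0 l.succ x) :=
    adm_of_eqNear_zero ((eqNear_gamma00succ (y₀ := y₀) hmet hh2smooth l).mul_right0)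
  have hZ2 : Adm y₀ (-2) (fun x => ∑ c : Fin n, christoffel (gW h h2) 0 0 c.succ x
      * christoffel (gW h h2) c.succ 0 l.succ x) := by
    apply Adm.sum
    intro c _
    exact adm_of_eqNear_zero ((eqNear_gamma00succ (y₀ := y₀) hmet hh2smooth c).mul_left0)
  have hZ3 : Adm y₀ (-2) (fun x => ∑ k : Fin n, christoffel (gW h h2) k.succ k.succ 0 x
      * christoffel (gW h h2) 0 0 l.succ x) := by
    apply Adm.sum
    intro k _
    exact adm_of_eqNear_zero ((eqNear_gamma00succ (y₀ := y₀) hmet hh2smooth l).mul_right0)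
  -- main part
  have hmain : Adm y₀ (-3) (fun x => ∑ k : Fin n, ((∑ c : Fin n,
      christoffel (gW h h2) k.succ k.succ c.succ x * christoffel (gW h h2) c.succ 0 l.succ x)
        - (x 0) ^ (-1 : ℤ) * christoffel h k k l (tailPt x))) := by
    apply Adm.sum
    intro k _
    have := Adm.sum Finset.univ (fun c _ => hS3term (y₀ := y₀) hmet hh2smooth l k c)
    refine this.congr (eqNear_of_forall fun x hx => ?_)
    dsimp only
    rw [Finset.sum_sub_distrib]
    congr 1
    have : ∑ c : Fin n, (x 0) ^ (-1 : ℤ) * (if c = l then (1:ℝ) else 0)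
        * christoffel h k k c (tailPt x)
        = ∑ c : Fin n, (if c = l then (x 0) ^ (-1 : ℤ) * christoffel h k k c (tailPt x) else 0) := by
      apply Finset.sum_congr rfl
      intro c _
      split_ifs <;> ring
    rw [this, Finset.sum_ite_eq' Finset.univ l
      (fun c => (x 0) ^ (-1 : ℤ) * christoffel h k k c (tailPt x))]
    simp
  -- assemble
  have htot := ((hZ1.add hZ2).add hZ3).add (hmain.mono (by norm_num : (-3 : ℤ) ≤ -2))
  refine htot.congr (eqNear_of_forall fun x hx => ?_)
  dsimp only
  rw [Fin.sum_univ_succ (f := fun a => ∑ b : Fin (n+1),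
    christoffel (gW h h2) a a b x * christoffel (gW h h2) b 0 l.succ x)]
  rw [Fin.sum_univ_succ (f := fun b =>
    christoffel (gW h h2) 0 0 b x * christoffel (gW h h2) b 0 l.succ x)]
  have e2 : ∀ k : Fin n, ∑ b : Fin (n+1),
      christoffel (gW h h2) k.succ k.succ b x * christoffel (gW h h2) b 0 l.succ x
      = christoffel (gW h h2) k.succ k.succ 0 x * christoffel (gW h h2) 0 0 l.succ x
        + ∑ c : Fin n, christoffel (gW h h2) k.succ k.succ c.succ x
            * christoffel (gW h h2) c.succ 0 l.succ x := by
    intro k; exact Fin.sum_univ_succ _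
  rw [Finset.sum_congr rfl fun k _ => e2 k]
  rw [Finset.sum_add_distrib, Finset.sum_sub_distrib, Finset.mul_sum]
  ring

/-- S4 -/
lemma hS4 (l : Fin n) : Adm y₀ (-2)
    (fun x => (∑ a : Fin (n+1), ∑ b : Fin (n+1),
        christoffel (gW h h2) a 0 b x * christoffel (gW h h2) b a l.succ x)
      - (x 0) ^ (-1 : ℤ) * ∑ k : Fin n, christoffel h k k l (tailPt x)) := by
  have hZ1 : Adm y₀ (-2) (fun x => christoffel (gW h h2) 0 0 0 x
      * christoffel (gW h h2) 0 0 l.succ x) :=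
    adm_of_eqNear_zero ((eqNear_gamma000 (y₀ := y₀) hmet hh2smooth).mul_left0)
  have hZ2 : Adm y₀ (-2) (fun x => ∑ c : Fin n, christoffel (gW h h2) 0 0 c.succ x
      * christoffel (gW h h2) c.succ 0 l.succ x) := by
    apply Adm.sum
    intro c _
    exact adm_of_eqNear_zero ((eqNear_gamma00succ (y₀ := y₀) hmet hh2smooth c).mul_left0)
  have hZ3 : Adm y₀ (-2) (fun x => ∑ k : Fin n, christoffel (gW h h2) k.succ 0 0 x
      * christoffel (gW h h2) 0 k.succ l.succ x) := by
    apply Adm.sum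
    intro k _
    exact adm_of_eqNear_zero ((eqNear_gammasucc00 (y₀ := y₀) hmet hh2smooth k).mul_left0)
  have hmain : Adm y₀ (-3) (fun x => ∑ k : Fin n, ((∑ c : Fin n,
      christoffel (gW h h2) k.succ 0 c.succ x * christoffel (gW h h2) c.succ k.succ l.succ x)
        - (x 0) ^ (-1 : ℤ) * christoffel h k k l (tailPt x))) := by
    apply Adm.sum
    intro k _
    have := Adm.sum Finset.univ (fun c _ => hS4term (y₀ := y₀) hmet hh2smooth l k c)
    refine this.congr (eqNear_of_forall fun x hx => ?_)
    dsimp only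
    rw [Finset.sum_sub_distrib]
    congr 1
    have : ∑ c : Fin n, (x 0) ^ (-1 : ℤ) * (if k = c then (1:ℝ) else 0)
        * christoffel h c k l (tailPt x)
        = ∑ c : Fin n, (if k = c then (x 0) ^ (-1 : ℤ) * christoffel h c k l (tailPt x) else 0) := by
      apply Finset.sum_congr rfl
      intro c _
      split_ifs <;> ring
    rw [this, Finset.sum_ite_eq Finset.univ k
      (fun c => (x 0) ^ (-1 : ℤ) * christoffel h c k l (tailPt x))]
    simp
  have htot := ((hZ1.add hZ2).add hZ3).add (hmain.mono (by norm_num : (-3 : ℤ) ≤ -2))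
  refine htot.congr (eqNear_of_forall fun x hx => ?_)
  dsimp only
  rw [Fin.sum_univ_succ (f := fun a => ∑ b : Fin (n+1),
    christoffel (gW h h2) a 0 b x * christoffel (gW h h2) b a l.succ x)]
  rw [Fin.sum_univ_succ (f := fun b =>
    christoffel (gW h h2) 0 0 b x * christoffel (gW h h2) b 0 l.succ x)]
  have e2 : ∀ k : Fin n, ∑ b : Fin (n+1),
      christoffel (gW h h2) k.succ 0 b x * christoffel (gW h h2) b k.succ l.succ x
      = christoffel (gW h h2) k.succ 0 0 x * christoffel (gW h h2) 0 k.succ l.succ x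
        + ∑ c : Fin n, christoffel (gW h h2) k.succ 0 c.succ x
            * christoffel (gW h h2) c.succ k.succ l.succ x := by
    intro k; exact Fin.sum_univ_succ _
  rw [Finset.sum_congr rfl fun k _ => e2 k]
  rw [Finset.sum_add_distrib, Finset.sum_sub_distrib, Finset.mul_sum]
  ring

/-- the Ricci curvature mixed component decays -/
lemma ricci_dec (l : Fin n) :
    Adm y₀ (-2) (fun x => ricci (gW h h2) 0 l.succ x) := by
  have := ((hS1 (y₀ := y₀) hmet hh2smooth l).sub (hS2 (y₀ := y₀) hmet hh2smooth l)).add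
    ((hS3 (y₀ := y₀) hmet hh2smooth l).sub (hS4 (y₀ := y₀) hmet hh2smooth l))
  refine this.congr (eqNear_of_forall fun x hx => ?_)
  dsimp only
  rw [ricci]
  ring

end Ricci

end Aux
namespace Aux

open Matrix

section Hess

variable {n : ℕ} {h : Pt n → Matrix (Fin n) (Fin n) ℝ}
  {h2 : ℕ → Pt n → Matrix (Fin n) (Fin n) ℝ} {f2 : ℕ → Pt n → ℝ} {y₀ : Pt n}

lemma ftrunc_fun_eq : ftrunc (n := n) f2 0 = fun z => (z 0) ^ 2 * (-(1/4) : ℝ)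
    + f2 0 (tailPt z) := by
  funext z
  rw [ftrunc_apply]
  ring

lemma hasFDerivAt_ftrunc (hf : ContDiff ℝ ∞ (f2 0)) (x : Pt (n+1)) :
    HasFDerivAt (ftrunc f2 0)
      ((-(1/4) : ℝ) • (((2 : ℝ) * x 0 ^ 1) • (coordCLM 0 : Pt (n+1) →L[ℝ] ℝ))
        + (fderiv ℝ (f2 0) (tailPt x)).comp tailCLM) x := by
  rw [ftrunc_fun_eq]
  have hd1 : HasFDerivAt (fun z : Pt (n+1) => (z 0) ^ 2)
      (((2 : ℝ) * x 0 ^ 1) • (coordCLM 0 : Pt (n+1) →L[ℝ] ℝ)) x := by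
    have h0 := hasFDerivAt_x0pow (n := n) 2 x
    have he2 : ((2 : ℕ) : ℝ) * x 0 ^ (2 - 1) = (2 : ℝ) * x 0 ^ 1 := by norm_num
    rw [he2] at h0
    exact h0
  exact (hd1.mul_const (-(1/4) : ℝ)).add
    (hasFDerivAt_tailcomp (hf.differentiable (by norm_num)).differentiableAt)

lemma pd_succ_ftrunc (hf : ContDiff ℝ ∞ (f2 0)) (x : Pt (n+1)) (a : Fin n) :
    pd a.succ (ftrunc f2 0) x = pd a (f2 0) (tailPt x) := by
  rw [(hasFDerivAt_ftrunc hf x).pd_eq a.succ]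
  simp only [ContinuousLinearMap.add_apply, ContinuousLinearMap.smulRight_apply,
    ContinuousLinearMap.smul_apply, ContinuousLinearMap.coe_comp', Function.comp_apply,
    tailCLM_apply, coordCLM_apply, single_succ_zero, single_succ_tail, smul_eq_mul]
  show (-(1/4)) * (2 * x 0 ^ 1 * 0) + (fderiv ℝ (f2 0) (tailPt x)) (EuclideanSpace.single a 1) = _
  unfold pd
  ring

variable (hmet : IsMetric h) (hh2smooth : ∀ i j k, ContDiff ℝ (⊤ : ℕ∞) fun x => h2 i x j k)
  (hf2smooth : ∀ i, ContDiff ℝ (⊤ : ℕ∞) (f2 i))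

include hmet hh2smooth hf2smooth

/-- hessian decomposition -/
lemma hess_dec (l : Fin n) : Adm y₀ (-2)
    (fun x => hessian (gW h h2) (ftrunc f2 0) 0 l.succ x
      + (x 0) ^ (-1 : ℤ) * pd l (f2 0) (tailPt x)) := by
  have hf : ContDiff ℝ ∞ (f2 0) := (hf2smooth 0).of_le (by simp)
  -- first term of the hessian vanishes identically
  have hfe : pd l.succ (ftrunc f2 0) = fun x => pd l (f2 0) (tailPt x) :=
    funext fun x => pd_succ_ftrunc hf x l
  have c1 : ∀ x : Pt (n+1), pd 0 (pd l.succ (ftrunc f2 0)) x = 0 := by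
    intro x
    rw [hfe]
    exact pd_zero_tailcomp ((pd_smooth l hf).differentiable (by norm_num)).differentiableAt
  -- zeroth term of the sum
  have hA0 : Adm y₀ (-2) (fun x => christoffel (gW h h2) 0 0 l.succ x
      * pd 0 (ftrunc f2 0) x) :=
    adm_of_eqNear_zero ((eqNear_gamma00succ (y₀ := y₀) hmet hh2smooth l).mul_left0)
  -- tangential terms
  have hterm : ∀ k : Fin n, Adm y₀ (-3)
      (fun x => christoffel (gW h h2) k.succ 0 l.succ x * pd k.succ (ftrunc f2 0) x
        - (x 0) ^ (-1 : ℤ) * (if k = l then (1:ℝ) else 0) * pd k (f2 0) (tailPt x)) := by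
    intro k
    have := (gammaW_mixed_dec (y₀ := y₀) hmet hh2smooth k l).mul
      (adm_tail (y₀ := y₀) (pd_smooth k hf))
    refine (this.mono (by norm_num : (-3) + 0 ≤ (-3 : ℤ))).congr
      (eqNear_of_forall fun x hx => ?_)
    dsimp only
    rw [pd_succ_ftrunc hf x k]
    ring
  have hsum : Adm y₀ (-3) (fun x =>
      (∑ k : Fin n, christoffel (gW h h2) k.succ 0 l.succ x * pd k.succ (ftrunc f2 0) x)
        - (x 0) ^ (-1 : ℤ) * pd l (f2 0) (tailPt x)) := by
    have := Adm.sum Finset.univ (fun k _ => hterm k)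
    refine this.congr (eqNear_of_forall fun x hx => ?_)
    dsimp only
    rw [Finset.sum_sub_distrib]
    congr 1
    have : ∑ k : Fin n, (x 0) ^ (-1 : ℤ) * (if k = l then (1:ℝ) else 0) * pd k (f2 0) (tailPt x)
        = ∑ k : Fin n, (if k = l then (x 0) ^ (-1 : ℤ) * pd k (f2 0) (tailPt x) else 0) := by
      apply Finset.sum_congr rfl
      intro k _
      split_ifs <;> ring
    rw [this, Finset.sum_ite_eq' Finset.univ l
      (fun k => (x 0) ^ (-1 : ℤ) * pd k (f2 0) (tailPt x))]
    simp
  have htot := (hA0.neg).add ((hsum.mono (by norm_num : (-3 : ℤ) ≤ -2)).neg)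
  refine htot.congr (eqNear_of_forall fun x hx => ?_)
  dsimp only
  rw [hessian]
  rw [Fin.sum_univ_succ (f := fun a : Fin (n+1) =>
    christoffel (gW h h2) a 0 l.succ x * pd a (ftrunc f2 0) x)]
  rw [c1 x]
  ring

/-- the full decomposition of the mixed soliton component -/
lemma solitonE_dec (l : Fin n) : Adm y₀ (-2)
    (fun x => solitonE h h2 f2 0 0 l.succ x
      + (x 0) ^ (-1 : ℤ) * pd l (f2 0) (tailPt x)) := by
  have hr := ricci_dec (y₀ := y₀) hmet hh2smooth l
  have hh := hess_dec (y₀ := y₀) hmet hh2smooth hf2smooth l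
  refine (hr.add hh).congr (eqNear_of_forall fun x hx => ?_)
  dsimp only
  rw [solitonE]
  have hw : warp (Htrunc h h2 0) x 0 l.succ = 0 := rfl
  have hgW : gW h h2 = warp (Htrunc h h2 0) := rfl
  rw [hw, hgW]
  ring

end Hess

end Aux

/-- substituting the formal expansions `H = r²h + h₀ + r⁻²h₂ + ⋯`,
`f = −r²/4 + f₀ + r⁻²f₂ + ⋯` into the mixed `(r,l)`-component of the gradient expanding
soliton equation and equating the coefficient of the leading order (`r⁻¹`) forces
`∂_l f₀ = 0`, i.e. `f₀` is locally constant on `Y`.  Here the equation holding at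
leading order is expressed by the truncations satisfying it up to `O(r⁻²)`. -/
theorem mixed_equation_forces_f0_constant {n : ℕ} (h : Pt n → Matrix (Fin n) (Fin n) ℝ)
    (hmet : IsMetric h)
    (h2 : ℕ → Pt n → Matrix (Fin n) (Fin n) ℝ) (f2 : ℕ → Pt n → ℝ)
    (hh2smooth : ∀ i j k, ContDiff ℝ (⊤ : ℕ∞) fun x => h2 i x j k)
    (hh2symm : ∀ i x, (h2 i x).IsSymm)
    (hf2smooth : ∀ i, ContDiff ℝ (⊤ : ℕ∞) (f2 i))
    (hmix : ∀ (m : ℕ) (l : Fin n) (y : Pt n),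
      (fun r : ℝ => solitonE h h2 f2 m 0 l.succ (consPt r y)) =O[atTop]
        fun r : ℝ => r ^ (-2 : ℤ)) :
    ∀ (l : Fin n) (x : Pt n), pd l (f2 0) x = 0 := by
  intro l y₀
  set c : ℝ := pd l (f2 0) y₀ with hc
  have hdec := Aux.solitonE_dec (y₀ := y₀) hmet hh2smooth hf2smooth l
  have hray := hdec.isBigO
  have hfr : (fun r : ℝ => (fun x : Pt (n+1) => solitonE h h2 f2 0 0 l.succ x
      + (x 0) ^ (-1 : ℤ) * pd l (f2 0) (tailPt x)) (consPt r y₀))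
      = fun r : ℝ => solitonE h h2 f2 0 0 l.succ (consPt r y₀) + r ^ (-1 : ℤ) * c := rfl
  rw [hfr] at hray
  have hmix0 := hmix 0 l y₀
  have hdiff : (fun r : ℝ => r ^ (-1 : ℤ) * c) =O[Filter.atTop] fun r : ℝ => r ^ (-2 : ℤ) := by
    have := hray.sub hmix0
    simpa using this
  rw [Asymptotics.isBigO_iff] at hdiff
  obtain ⟨C, hC⟩ := hdiff
  have hub : ∀ᶠ r : ℝ in Filter.atTop, |c| ≤ C * r⁻¹ := by
    filter_upwards [hC, Filter.eventually_gt_atTop (0 : ℝ)] with r h1 h2'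
    rw [Real.norm_eq_abs, Real.norm_eq_abs] at h1
    have hr0 : r ≠ 0 := ne_of_gt h2'
    have e1 : |r ^ (-1 : ℤ) * c| = r⁻¹ * |c| := by
      rw [abs_mul, zpow_neg_one, abs_inv, abs_of_pos h2']
    have e2 : |r ^ (-2 : ℤ)| = (r ^ 2)⁻¹ := by
      rw [show ((-2:ℤ)) = -((2:ℕ) : ℤ) by norm_num, _root_.zpow_neg, zpow_natCast, abs_inv,
        abs_of_pos (pow_pos h2' 2)]
    rw [e1, e2] at h1
    calc |c| = r * (r⁻¹ * |c|) := by field_simp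
      _ ≤ r * (C * (r ^ 2)⁻¹) := mul_le_mul_of_nonneg_left h1 (le_of_lt h2')
      _ = C * r⁻¹ := by field_simp
  have hlim : Filter.Tendsto (fun r : ℝ => C * r⁻¹) Filter.atTop (nhds 0) := by
    simpa using tendsto_inv_atTop_zero.const_mul C
  have hle : |c| ≤ 0 := ge_of_tendsto hlim hub
  exact abs_nonpos_iff.mp hle
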